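/- arXiv:1304.2906 — 9 statements merged into one kernel-verified Lean document; each statement's English description precedes it below -/
import Mathlib

section
/- Let e ≥ 2, and let d, z be integers. Let M be the e × e integer matrix with M(i,i) = z for all i, M(i,i+1) = d for 0 ≤ i ≤ e−2, M(e−1,0) = 1, and all other entries 0. Then for every n ≥ 0 and all indices 0 ≤ i, j ≤ e−1, the (i,j) entry of M^n equals μ_n(e, (i−j) mod e, d, z) if i ≥ j, and equals d · μ_n(e, (i−j) mod e, d, z) if i < j. In particular, for e = 3 the matrix [[z,d,0],[0,z,d],[1,0,z]]^n equals [[μ_n(3,0,d,z), d·μ_n(3,2,d,z), d·μ_n(3,1,d,z)], [μ_n(3,1,d,z), μ_n(3,0,d,z), d·μ_n(3,2,d,z)], [μ_n(3,2,d,z), μ_n(3,1,d,z), μ_n(3,0,d,z)]]. -/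
/-- The generalized Rédei polynomials
`μ_n(e,k,d,z) = Σ_{h=0}^{n} C(n, e·h − k) · d^{(e−1)h − k} · z^{n − e·h + k}`,
where the binomial coefficient is `0` when `e·h − k < 0` or `e·h − k > n`. -/
def mu (e k : ℕ) (d z : ℤ) (n : ℕ) : ℤ :=
  ∑ h ∈ Finset.range (n + 1),
    if k ≤ e * h then
      (n.choose (e * h - k) : ℤ) * d ^ ((e - 1) * h - k) * z ^ (n + k - e * h)
    else 0

/-!
Write `M = z • 1 + S`, where `S` is the cyclic shift `i ↦ i + 1` with weight `d`, except weight `1`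
on the wrap-around `e - 1 ↦ 0`.  Then `M ^ (n + 1) = M * M ^ n` gives
`(M ^ (n + 1)) i j = z (M ^ n) i j + w i (M ^ n) (i + 1) j`, with `w` the weight of `S`.
Pascal's rule gives the same recurrence for `μ` in `k` modulo `e`:
`μ_{n+1}(k) = z μ_n(k) + w k μ_n(k + 1)`, the wrap-around `k = e - 1 ↦ 0` costing one
shift of the summation index `h`.  The factor `c i j ∈ {1, d}` in front of `μ` is compatible
with both recurrences through the identity `c i j * w (i - j) = w i * c (i + 1) j`.
-/

open Finset

theorem Nat.choose_mul_pow_succ_succ {R : Type*} [CommSemiring R] (z : R) (n m : ℕ) :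
    ((n + 1).choose (m + 1) : R) * z ^ (n - m) =
      z * ((n.choose (m + 1) : R) * z ^ (n - (m + 1))) + (n.choose m : R) * z ^ (n - m) := by
  rcases lt_trichotomy m n with hmn | rfl | hnm
  · obtain ⟨r, rfl⟩ := Nat.exists_eq_add_of_lt hmn
    rw [show m + r + 1 - m = r + 1 by omega, show m + r + 1 - (m + 1) = r by omega,
      Nat.choose_succ_succ', Nat.cast_add, pow_succ]
    ring
  · simp
  · simp [Nat.choose_eq_zero_of_lt hnm, Nat.choose_eq_zero_of_lt (Nat.lt_succ_of_lt hnm),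
      Nat.choose_eq_zero_of_lt (Nat.succ_lt_succ hnm)]

-- The summand of `mu`, with the exponent of `z` in the form used by `Nat.choose_mul_pow_succ_succ`.
def muTerm (e k : ℕ) (d z : ℤ) (n h : ℕ) : ℤ :=
  if k ≤ e * h then
    (n.choose (e * h - k) : ℤ) * z ^ (n - (e * h - k)) * d ^ ((e - 1) * h - k)
  else 0

section Mu

variable {e k : ℕ} {d z : ℤ} {n h : ℕ}

theorem mu_zero : mu e k d z 0 = if k = 0 then 1 else 0 := by
  rcases k with _ | k <;> simp [mu]

theorem mu_eq_sum_muTerm : mu e k d z n = ∑ h ∈ range (n + 1), muTerm e k d z n h := by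
  refine sum_congr rfl fun h _ => ?_
  unfold muTerm
  split_ifs with hkh
  · rw [show n + k - e * h = n - (e * h - k) by omega]
    ring
  · rfl

theorem muTerm_succ_eq_zero (hk : k < e) : muTerm e k d z n (n + 1) = 0 := by
  have : n < e * (n + 1) - k := by
    have : n ≤ e * n := Nat.le_mul_of_pos_left n (by omega)
    rw [Nat.mul_succ]
    omega
  simp [muTerm, Nat.choose_eq_zero_of_lt this]

theorem mu_eq_sum_range_add_two (hk : k < e) :
    mu e k d z n = ∑ h ∈ range (n + 2), muTerm e k d z n h := by
  rw [sum_range_succ, muTerm_succ_eq_zero hk, add_zero, mu_eq_sum_muTerm]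

theorem muTerm_succ_zero : muTerm e k d z (n + 1) 0 = z * muTerm e k d z n 0 := by
  rcases k with _ | k
  · simp [muTerm, pow_succ, mul_comm]
  · simp [muTerm]

theorem muTerm_succ_of_add_one_lt (hk : k + 1 < e) :
    muTerm e k d z (n + 1) h = z * muTerm e k d z n h + d * muTerm e (k + 1) d z n h := by
  rcases h with _ | h
  · have : muTerm e (k + 1) d z n 0 = 0 := if_neg (by omega)
    rw [muTerm_succ_zero, this, mul_zero, add_zero]
  · have hmul : e * (h + 1) = e * h + e := Nat.mul_succ e h
    have hmul' : (e - 1) * (h + 1) = (e - 1) * h + (e - 1) := Nat.mul_succ (e - 1) h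
    generalize hm : e * (h + 1) - (k + 1) = m
    unfold muTerm
    rw [if_pos (by omega), if_pos (by omega), if_pos (by omega), hm,
      show e * (h + 1) - k = m + 1 by omega,
      show (e - 1) * (h + 1) - k = ((e - 1) * (h + 1) - (k + 1)) + 1 by omega,
      show n + 1 - (m + 1) = n - m by omega, pow_succ, Nat.choose_mul_pow_succ_succ]
    ring

theorem muTerm_succ_succ_of_add_one_eq (hk : k + 1 = e) :
    muTerm e k d z (n + 1) (h + 1) = z * muTerm e k d z n (h + 1) + muTerm e 0 d z n h := by
  have h1 : e * (h + 1) - k = e * h + 1 := by rw [Nat.mul_succ]; omega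
  have h2 : (e - 1) * (h + 1) - k = (e - 1) * h := by rw [Nat.mul_succ]; omega
  have hkh : k ≤ e * (h + 1) := by rw [Nat.mul_succ]; omega
  unfold muTerm
  rw [if_pos hkh, if_pos hkh, if_pos (Nat.zero_le _), h1, h2, Nat.sub_zero, Nat.sub_zero,
    show n + 1 - (e * h + 1) = n - e * h by omega, Nat.choose_mul_pow_succ_succ]
  ring

theorem mu_succ_of_add_one_lt (hk : k + 1 < e) :
    mu e k d z (n + 1) = z * mu e k d z n + d * mu e (k + 1) d z n := by
  rw [mu_eq_sum_muTerm, mu_eq_sum_range_add_two (by omega), mu_eq_sum_range_add_two hk,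
    mul_sum, mul_sum, ← sum_add_distrib]
  exact sum_congr rfl fun h _ => muTerm_succ_of_add_one_lt hk

theorem mu_succ_of_add_one_eq (hk : k + 1 = e) :
    mu e k d z (n + 1) = z * mu e k d z n + mu e 0 d z n := by
  rw [mu_eq_sum_muTerm, mu_eq_sum_range_add_two (by omega), mu_eq_sum_muTerm (k := 0),
    sum_range_succ', sum_range_succ' _ (n + 1), mul_add, mul_sum, add_right_comm,
    ← sum_add_distrib, muTerm_succ_zero]
  congr 1
  exact sum_congr rfl fun h _ => muTerm_succ_succ_of_add_one_eq hk

end Mu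

theorem Fin.val_sub_eq_ite {e : ℕ} (i j : Fin e) :
    ((i - j : Fin e) : ℕ) = if (j : ℕ) ≤ i then (i : ℕ) - j else e + i - j := by
  split_ifs with hji
  · exact Fin.coe_sub_iff_le.mpr hji
  · exact Fin.coe_sub_iff_lt.mpr (not_le.mp hji)

section Cyclic

variable {e : ℕ} [NeZero e]

theorem Fin.val_add_one_eq_ite (i : Fin e) :
    ((i + 1 : Fin e) : ℕ) = if (i : ℕ) + 1 < e then (i : ℕ) + 1 else 0 := by
  obtain ⟨m, rfl⟩ : ∃ m, e = m + 1 := Nat.exists_eq_succ_of_ne_zero (NeZero.ne e)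
  rw [Fin.val_add_one]
  by_cases hi : i = Fin.last m
  · simp [hi]
  · have : (i : ℕ) < m := Fin.val_lt_last hi
    simp [hi, this]

def shiftWeight (d : ℤ) (i : Fin e) : ℤ := if (i : ℕ) + 1 < e then d else 1

def entryWeight (d : ℤ) (i j : Fin e) : ℤ := if (j : ℕ) ≤ i then 1 else d

theorem entryWeight_mul_shiftWeight (d : ℤ) (i j : Fin e) :
    entryWeight d i j * shiftWeight d (i - j) = shiftWeight d i * entryWeight d (i + 1) j := by
  have := i.isLt
  have := j.isLt
  simp only [entryWeight, shiftWeight, Fin.val_add_one_eq_ite, Fin.val_sub_eq_ite]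
  split_ifs <;> omega

theorem mu_succ_eq_add_shiftWeight_mul (k : Fin e) (d z : ℤ) (n : ℕ) :
    mu e k d z (n + 1) = z * mu e k d z n + shiftWeight d k * mu e (k + 1 : Fin e) d z n := by
  rw [shiftWeight, Fin.val_add_one_eq_ite]
  split_ifs with hk
  · exact mu_succ_of_add_one_lt hk
  · rw [one_mul]
    exact mu_succ_of_add_one_eq (by omega)

variable (e) in
def cyclicMatrix (d z : ℤ) : Matrix (Fin e) (Fin e) ℤ :=
  Matrix.of fun i l => (if l = i then z else 0) + if l = i + 1 then shiftWeight d i else 0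

theorem cyclicMatrix_mul_apply (d z : ℤ) (N : Matrix (Fin e) (Fin e) ℤ) (i j : Fin e) :
    (cyclicMatrix e d z * N) i j = z * N i j + shiftWeight d i * N (i + 1) j := by
  simp [cyclicMatrix, Matrix.mul_apply, add_mul, sum_add_distrib]

theorem cyclicMatrix_pow_apply (d z : ℤ) (n : ℕ) (i j : Fin e) :
    (cyclicMatrix e d z ^ n) i j = entryWeight d i j * mu e (i - j : Fin e) d z n := by
  induction n generalizing i j with
  | zero =>
    by_cases hij : i = j
    · simp [hij, entryWeight, mu_zero]
    · simp [hij, mu_zero, sub_eq_zero]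
  | succ n ih =>
    rw [pow_succ', cyclicMatrix_mul_apply, ih, ih, ← sub_add_eq_add_sub,
      mu_succ_eq_add_shiftWeight_mul]
    linear_combination -(mu e (i - j + 1 : Fin e) d z n) * entryWeight_mul_shiftWeight d i j

theorem cyclicMatrix_apply_eq_ite (he : 2 ≤ e) (d z : ℤ) (i l : Fin e) :
    cyclicMatrix e d z i l =
      if i = l then z
      else if (l : ℕ) = (i : ℕ) + 1 then d
      else if (i : ℕ) = e - 1 ∧ (l : ℕ) = 0 then 1
      else 0 := by
  have := i.isLt
  simp only [cyclicMatrix, Matrix.of_apply, Fin.ext_iff, Fin.val_add_one_eq_ite, shiftWeight]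
  split_ifs <;> omega

end Cyclic

/-- Let `M` be the `e × e` integer matrix with `z` on the diagonal, `d` on the
superdiagonal, `1` in the lower-left corner and zeros elsewhere.  Then the
`(i,j)` entry of `M^n` equals `μ_n(e, (i−j) mod e, d, z)` when `i ≥ j`, and
`d · μ_n(e, (i−j) mod e, d, z)` when `i < j`  (here `(i−j) mod e` is computed
via subtraction in `Fin e`). -/
theorem pow_entries_eq_mu (e : ℕ) (he : 2 ≤ e) (d z : ℤ)
    (M : Matrix (Fin e) (Fin e) ℤ)
    (hM : ∀ i j : Fin e, M i j =
      if i = j then z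
      else if (j : ℕ) = (i : ℕ) + 1 then d
      else if (i : ℕ) = e - 1 ∧ (j : ℕ) = 0 then 1
      else 0)
    (n : ℕ) (i j : Fin e) :
    (M ^ n) i j =
      if (j : ℕ) ≤ (i : ℕ) then mu e ((i - j : Fin e) : ℕ) d z n
      else d * mu e ((i - j : Fin e) : ℕ) d z n := by
  have : NeZero e := ⟨by omega⟩
  obtain rfl : M = cyclicMatrix e d z :=
    Matrix.ext fun i l => (hM i l).trans (cyclicMatrix_apply_eq_ite he d z i l).symm
  rw [cyclicMatrix_pow_apply, entryWeight]
  split_ifs <;> ring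
end

section
/- For all integers e ≥ 2, d ≥ 1, z, every 0 ≤ k ≤ e−1, and every n ≥ 0, the sequence (μ_n(e,k,d,z))_{n≥0} satisfies the linear recurrence with characteristic polynomial (x − z)^e − d^{e−1}; explicitly, μ_{n+e}(e,k,d,z) = Σ_{j=1}^{e} (−1)^{j+1} C(e,j) z^{j} μ_{n+e−j}(e,k,d,z) + d^{e−1} μ_n(e,k,d,z). In particular, for e = 3: μ_{n+3}(3,k,d,z) = 3z·μ_{n+2}(3,k,d,z) − 3z²·μ_{n+1}(3,k,d,z) + (z³ + d²)·μ_n(3,k,d,z). -/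
open Polynomial Finset

section CoeffPairing

variable {R : Type*} [CommRing R]

def coeffPairing (c : ℕ → R) : R[X] →ₗ[R] R :=
  lsum fun i => LinearMap.mulRight R (c i)

lemma coeffPairing_monomial (c : ℕ → R) (i : ℕ) (a : R) :
    coeffPairing c (monomial i a) = a * c i := by
  simp [coeffPairing, sum_monomial_index]

lemma coeffPairing_X_pow_mul {c : ℕ → R} {m : ℕ} {a : R} (hc : ∀ i, c (i + m) = a * c i)
    (p : R[X]) : coeffPairing c (X ^ m * p) = a * coeffPairing c p := by
  induction p using Polynomial.induction_on' with
  | add p q hp hq => rw [mul_add, map_add, map_add, hp, hq, mul_add]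
  | monomial i b =>
    rw [X_pow_mul_monomial, coeffPairing_monomial, coeffPairing_monomial, hc]
    ring

lemma coeffPairing_X_add_C_pow (c : ℕ → R) (z : R) (n : ℕ) :
    coeffPairing c ((X + C z) ^ n) =
      ∑ j ∈ range (n + 1), (n.choose j : R) * c j * z ^ (n - j) := by
  have hdeg : ((X + C z) ^ n).natDegree < n + 1 := Nat.lt_succ_of_le (by compute_degree)
  rw [coeffPairing, lsum_apply, sum_over_range' _ (fun _ => map_zero _) _ hdeg]
  simp only [LinearMap.mulRight_apply, coeff_X_add_C_pow]
  exact sum_congr rfl fun _ _ => by ring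

lemma pow_add_eq_sum_add_pow_mul_sub_pow {A : Type*} [CommRing A] [Algebra R A] (t : A) (z : R)
    (m n : ℕ) :
    t ^ (n + m) = ∑ j ∈ Icc 1 m, ((-1) ^ (j + 1) * (m.choose j : R) * z ^ j) • t ^ (n + m - j) +
      t ^ n * (t - algebraMap R A z) ^ m := by
  have hterm : ∀ j ∈ Icc 1 m, t ^ n * ((-algebraMap R A z) ^ j * t ^ (m - j) * m.choose j) =
      -(((-1) ^ (j + 1) * (m.choose j : R) * z ^ j) • t ^ (n + m - j)) := by
    intro j hj
    rw [show n + m - j = n + (m - j) by grind, Algebra.smul_def]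
    simp only [map_mul, map_pow, map_neg, map_one, map_natCast]
    ring
  rw [sub_eq_neg_add, add_pow, sum_range_eq_add_Ico _ m.add_one_pos, Ico_add_one_right_eq_Icc,
    mul_add, mul_sum, sum_congr rfl hterm, sum_neg_distrib]
  simp [pow_add]

theorem coeffPairing_X_add_C_pow_add {c : ℕ → R} {m : ℕ} {a : R} (hc : ∀ i, c (i + m) = a * c i)
    (z : R) (n : ℕ) :
    coeffPairing c ((X + C z) ^ (n + m)) =
      ∑ j ∈ Icc 1 m, (-1) ^ (j + 1) * (m.choose j : R) * z ^ j *
        coeffPairing c ((X + C z) ^ (n + m - j)) + a * coeffPairing c ((X + C z) ^ n) := by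
  rw [pow_add_eq_sum_add_pow_mul_sub_pow (X + C z) z m n, map_add, map_sum, algebraMap_eq,
    add_sub_cancel_right, mul_comm, coeffPairing_X_pow_mul hc]
  simp only [map_smul, smul_eq_mul]

end CoeffPairing

def muCoeff (e k : ℕ) (d : ℤ) (j : ℕ) : ℤ :=
  if e ∣ j + k then d ^ ((e - 1) * ((j + k) / e) - k) else 0

lemma muCoeff_add_self {e k : ℕ} (he : 0 < e) (hk : k < e) (d : ℤ) (j : ℕ) :
    muCoeff e k d (j + e) = d ^ (e - 1) * muCoeff e k d j := by
  have hjk : j + e + k = j + k + e := by omega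
  simp only [muCoeff, hjk, Nat.dvd_add_self_right]
  split_ifs with hdvd
  · obtain ⟨q, hq⟩ := hdvd
    have hexp : (e - 1) * ((j + k + e) / e) - k = (e - 1) * ((j + k) / e) - k + (e - 1) := by
      rw [hq, ← mul_add_one, Nat.mul_div_cancel_left _ he, Nat.mul_div_cancel_left _ he,
        mul_add_one]
      rcases q with _ | q
      · omega
      · have : e - 1 ≤ (e - 1) * (q + 1) := Nat.le_mul_of_pos_right _ q.succ_pos
        omega
    rw [hexp, pow_add, mul_comm]
  · rw [mul_zero]

lemma mu_eq_sum_filter (e k : ℕ) (d z : ℤ) (n : ℕ) :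
    mu e k d z n = ∑ h ∈ (range (n + 1)).filter (fun h => k ≤ e * h ∧ e * h ≤ n + k),
      (n.choose (e * h - k) : ℤ) * d ^ ((e - 1) * h - k) * z ^ (n + k - e * h) := by
  rw [sum_filter]
  refine sum_congr rfl fun h _ => ?_
  by_cases h1 : k ≤ e * h
  · by_cases h2 : e * h ≤ n + k
    · simp [h1, h2]
    · simp [h1, h2, Nat.choose_eq_zero_of_lt (show n < e * h - k by omega)]
  · simp [h1]

lemma mu_eq_sum_choose_mul_muCoeff {e k : ℕ} (he : 0 < e) (hk : k < e) (d z : ℤ) (n : ℕ) :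
    mu e k d z n = ∑ j ∈ range (n + 1), (n.choose j : ℤ) * muCoeff e k d j * z ^ (n - j) := by
  rw [mu_eq_sum_filter]
  calc _ = ∑ j ∈ (range (n + 1)).filter (fun j => e ∣ j + k),
        (n.choose j : ℤ) * muCoeff e k d j * z ^ (n - j) := by
        apply sum_nbij' (fun h => e * h - k) (fun j => (j + k) / e)
        · intro h hh
          simp only [mem_filter, mem_range] at hh ⊢
          refine ⟨by omega, ?_⟩
          rw [Nat.sub_add_cancel hh.2.1]
          exact dvd_mul_right e h
        · intro j hj
          simp only [mem_filter, mem_range] at hj ⊢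
          obtain ⟨hjn, q, hq⟩ := hj
          rw [hq, Nat.mul_div_cancel_left q he]
          refine ⟨?_, by omega, by omega⟩
          -- `e * q = j + k < n + e` since `k < e`
          by_contra! hqn
          nlinarith
        · intro h hh
          simp only [mem_filter, mem_range] at hh
          rw [Nat.sub_add_cancel hh.2.1, Nat.mul_div_cancel_left h he]
        · intro j hj
          simp only [mem_filter, mem_range] at hj
          obtain ⟨-, q, hq⟩ := hj
          rw [hq, Nat.mul_div_cancel_left q he]
          omega
        · intro h hh
          simp only [mem_filter, mem_range] at hh
          rw [muCoeff, Nat.sub_add_cancel hh.2.1, if_pos (dvd_mul_right e h),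
            Nat.mul_div_cancel_left h he, show n - (e * h - k) = n + k - e * h by omega]
    _ = _ := by
        rw [sum_filter]
        refine sum_congr rfl fun j _ => ?_
        unfold muCoeff
        split_ifs <;> simp

lemma mu_eq_coeffPairing {e k : ℕ} (he : 0 < e) (hk : k < e) (d z : ℤ) (n : ℕ) :
    mu e k d z n = coeffPairing (muCoeff e k d) ((X + C z) ^ n) := by
  rw [mu_eq_sum_choose_mul_muCoeff he hk, coeffPairing_X_add_C_pow]

theorem mu_linear_recurrence_general (e k : ℕ) (he : 2 ≤ e) (hk : k ≤ e - 1)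
    (d z : ℤ) (n : ℕ) :
    mu e k d z (n + e) =
      (∑ j ∈ Finset.Icc 1 e,
        (-1 : ℤ) ^ (j + 1) * (e.choose j : ℤ) * z ^ j * mu e k d z (n + e - j))
      + d ^ (e - 1) * mu e k d z n := by
  have he' : 0 < e := by omega
  have hk' : k < e := by omega
  simp only [mu_eq_coeffPairing he' hk']
  exact coeffPairing_X_add_C_pow_add (muCoeff_add_self he' hk' d) z n

/-- The sequence `(μ_n(e,k,d,z))_{n≥0}` satisfies the linear recurrence with
characteristic polynomial `(x − z)^e − d^{e−1}`:
`μ_{n+e} = Σ_{j=1}^{e} (−1)^{j+1} C(e,j) z^j μ_{n+e−j} + d^{e−1} μ_n`. -/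
theorem mu_linear_recurrence (e k : ℕ) (he : 2 ≤ e) (hk : k ≤ e - 1)
    (d z : ℤ) (hd : 1 ≤ d) (n : ℕ) :
    mu e k d z (n + e) =
      (∑ j ∈ Finset.Icc 1 e,
        (-1 : ℤ) ^ (j + 1) * (e.choose j : ℤ) * z ^ j * mu e k d z (n + e - j))
      + d ^ (e - 1) * mu e k d z n :=
  mu_linear_recurrence_general e k he hk d z n
end

section
/- Let e ≥ 2, let d ≥ 1 be an integer that is not an e-th power of an integer, and let z ≥ 1 be an integer. Then for every 0 ≤ k ≤ e−2, the sequence of real numbers μ_n(e,k,d,z) / μ_n(e,e−1,d,z) converges, as n → ∞, to d^{(e−k−1)/e} (the real (e−k−1)/e-th power of d). -/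
open Filter Topology

/-! Put `r = d^{1/e}` and `β = r^{e-1}`. Then `r^k μ_n(e,k,d,z)` is the part of the binomial
expansion of `(z + β)^n` made of the terms `C(n,j) z^{n-j} β^j` with `j ≡ -k (mod e)`, i.e.
`(z + β)^n` times the probability that the lazy walk on `ℤ/e` which steps `+1` with probability
`q = β/(z+β)` and stays with probability `p = z/(z+β)` sits at `-k` after `n` steps. Within `e`
steps this walk reaches every residue with probability at least `min p q ^ e`, so every `e` steps
the spread `max - min` of a function shrinks by the factor `1 - 2 min p q ^ e`; as the walk
preserves sums, its distribution tends to the uniform one. Hence `μ_n(e,k,d,z) ~ (z+β)^n/(e r^k)`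
and the ratio tends to `r^{e-1-k}`. -/

open Finset

section Spread

variable {ι : Type*} [Fintype ι]

noncomputable def spread (f : ι → ℝ) : ℝ := (⨆ i, f i) - ⨅ i, f i

theorem spread_nonneg [Nonempty ι] (f : ι → ℝ) : 0 ≤ spread f :=
  sub_nonneg.2 <| (ciInf_le (Finite.bddBelow_range f) (Classical.arbitrary ι)).trans
    (le_ciSup (Finite.bddAbove_range f) _)

theorem abs_sub_mean_le_spread [Nonempty ι] (f : ι → ℝ) (i : ι) :
    |f i - (∑ j, f j) / Fintype.card ι| ≤ spread f := by
  have hcard : (0 : ℝ) < Fintype.card ι := by exact_mod_cast Fintype.card_pos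
  have hlo : (⨅ j, f j) ≤ (∑ j, f j) / Fintype.card ι := by
    rw [le_div_iff₀ hcard, mul_comm, ← nsmul_eq_mul]
    exact card_nsmul_le_sum _ _ _ fun j _ => ciInf_le (Finite.bddBelow_range f) j
  have hhi : (∑ j, f j) / Fintype.card ι ≤ ⨆ j, f j := by
    rw [div_le_iff₀ hcard, mul_comm, ← nsmul_eq_mul]
    exact sum_le_card_nsmul _ _ _ fun j _ => le_ciSup (Finite.bddAbove_range f) j
  rw [abs_sub_le_iff, spread]
  constructor <;>
    linarith [le_ciSup (Finite.bddAbove_range f) i, ciInf_le (Finite.bddBelow_range f) i]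

end Spread

section CyclicStep

variable {e : ℕ}

def cyclicStep (a b : ℝ) (f : ZMod e → ℝ) (i : ZMod e) : ℝ := a * f i + b * f (i - 1)

theorem iterate_cyclicStep_apply (a b : ℝ) (f : ZMod e → ℝ) (n : ℕ) (i : ZMod e) :
    (cyclicStep a b)^[n] f i =
      ∑ j ∈ range (n + 1), (n.choose j : ℝ) * (a ^ (n - j) * b ^ j * f (i - j)) := by
  induction n generalizing i with
  | zero => simp
  | succ n ih =>
    have pascal := sum_choose_succ_mul (fun j m => a ^ m * b ^ j * f (i - j)) n
    rw [Function.iterate_succ_apply', cyclicStep, ih, ih, pascal, mul_sum, mul_sum]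
    congr 1 <;> refine sum_congr rfl fun j hj => ?_
    · rw [Nat.sub_add_comm (mem_range_succ_iff.1 hj), pow_succ]; ring
    · push_cast; ring_nf

theorem iterate_cyclicStep_mul (s a b : ℝ) (f : ZMod e → ℝ) (n : ℕ) (i : ZMod e) :
    (cyclicStep (s * a) (s * b))^[n] f i = s ^ n * (cyclicStep a b)^[n] f i := by
  induction n generalizing i with
  | zero => simp
  | succ n ih => simp only [Function.iterate_succ_apply', cyclicStep, ih]; ring

variable {a b : ℝ}

theorem cyclicStep_affine (hab : a + b = 1) (c s : ℝ) (f : ZMod e → ℝ) :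
    cyclicStep a b (fun j => c + s * f j) = fun j => c + s * cyclicStep a b f j := by
  funext j; simp only [cyclicStep]; linear_combination c * hab

theorem iterate_cyclicStep_affine (hab : a + b = 1) (c s : ℝ) (f : ZMod e → ℝ) (n : ℕ) :
    (cyclicStep a b)^[n] (fun j => c + s * f j) = fun j => c + s * (cyclicStep a b)^[n] f j :=
  (Function.Semiconj.iterate_right (f := fun g j => c + s * g j)
    (fun g => (cyclicStep_affine hab c s g).symm) n f).symm

theorem sum_iterate_cyclicStep [NeZero e] (hab : a + b = 1) (f : ZMod e → ℝ) (n : ℕ) :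
    ∑ i, (cyclicStep a b)^[n] f i = ∑ i, f i := by
  induction n with
  | zero => rfl
  | succ n ih =>
    rw [Function.iterate_succ_apply', ← ih]
    simp only [cyclicStep, sum_add_distrib, ← mul_sum]
    have shift : ∑ i, (cyclicStep a b)^[n] f (i - 1) = ∑ i, (cyclicStep a b)^[n] f i :=
      (Equiv.subRight 1).sum_comp _
    rw [shift]
    linear_combination (∑ i, (cyclicStep a b)^[n] f i) * hab

theorem pow_mul_pow_mul_le_iterate_cyclicStep (ha : 0 ≤ a) (hb : 0 ≤ b) {g : ZMod e → ℝ}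
    (hg : 0 ≤ g) {n t : ℕ} (ht : t ≤ n) (i : ZMod e) :
    a ^ (n - t) * b ^ t * g (i - t) ≤ (cyclicStep a b)^[n] g i := by
  have hterm :
      ∀ j ∈ range (n + 1), 0 ≤ (n.choose j : ℝ) * (a ^ (n - j) * b ^ j * g (i - j)) :=
    fun j _ => mul_nonneg (Nat.cast_nonneg _) (mul_nonneg (by positivity) (hg _))
  rw [iterate_cyclicStep_apply]
  refine le_trans ?_ (single_le_sum hterm (mem_range_succ_iff.2 ht))
  exact le_mul_of_one_le_left (mul_nonneg (by positivity) (hg _))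
    (by exact_mod_cast Nat.choose_pos ht)

end CyclicStep

section Contraction

variable {e : ℕ} [NeZero e] {a b : ℝ}

theorem spread_cyclicStep_le (ha : 0 ≤ a) (hb : 0 ≤ b) (hab : a + b = 1) (f : ZMod e → ℝ) :
    spread (cyclicStep a b f) ≤ spread f := by
  have hM : (⨆ j, f j) = a * (⨆ j, f j) + b * ⨆ j, f j := by rw [← add_mul, hab, one_mul]
  have hm : (⨅ j, f j) = a * (⨅ j, f j) + b * ⨅ j, f j := by rw [← add_mul, hab, one_mul]
  have upper : ∀ i, cyclicStep a b f i ≤ ⨆ j, f j := fun i => by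
    have h₁ := mul_nonneg ha (sub_nonneg.2 (le_ciSup (Finite.bddAbove_range f) i))
    have h₂ := mul_nonneg hb (sub_nonneg.2 (le_ciSup (Finite.bddAbove_range f) (i - 1)))
    simp only [cyclicStep]; linarith
  have lower : ∀ i, ⨅ j, f j ≤ cyclicStep a b f i := fun i => by
    have h₁ := mul_nonneg ha (sub_nonneg.2 (ciInf_le (Finite.bddBelow_range f) i))
    have h₂ := mul_nonneg hb (sub_nonneg.2 (ciInf_le (Finite.bddBelow_range f) (i - 1)))
    simp only [cyclicStep]; linarith
  simp only [spread]
  linarith [ciSup_le upper, le_ciInf lower]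

theorem min_pow_le_pow_mul_pow (ha : 0 ≤ a) (hb : 0 ≤ b) {n t : ℕ} (ht : t ≤ n) :
    min a b ^ n ≤ a ^ (n - t) * b ^ t := by
  have hmin : 0 ≤ min a b := le_min ha hb
  calc min a b ^ n = min a b ^ (n - t) * min a b ^ t := by rw [← pow_add, Nat.sub_add_cancel ht]
    _ ≤ a ^ (n - t) * b ^ t :=
      mul_le_mul (pow_le_pow_left₀ hmin (min_le_left a b) _)
        (pow_le_pow_left₀ hmin (min_le_right a b) _) (by positivity) (by positivity)

theorem min_pow_mul_le_iterate_cyclicStep (ha : 0 ≤ a) (hb : 0 ≤ b) {g : ZMod e → ℝ}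
    (hg : 0 ≤ g) (i i₀ : ZMod e) : min a b ^ e * g i₀ ≤ (cyclicStep a b)^[e] g i := by
  have ht : (i - i₀).val ≤ e := (ZMod.val_lt _).le
  have hi₀ : i - ((i - i₀).val : ZMod e) = i₀ := by rw [ZMod.natCast_zmod_val, sub_sub_cancel]
  calc min a b ^ e * g i₀ ≤ a ^ (e - (i - i₀).val) * b ^ (i - i₀).val * g i₀ :=
        mul_le_mul_of_nonneg_right (min_pow_le_pow_mul_pow ha hb ht) (hg i₀)
    _ ≤ (cyclicStep a b)^[e] g i := by
      have h := pow_mul_pow_mul_le_iterate_cyclicStep ha hb hg ht i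
      rwa [hi₀] at h

theorem spread_iterate_cyclicStep_le (ha : 0 ≤ a) (hb : 0 ≤ b) (hab : a + b = 1)
    (f : ZMod e → ℝ) :
    spread ((cyclicStep a b)^[e] f) ≤ (1 - 2 * min a b ^ e) * spread f := by
  obtain ⟨i₀, hi₀⟩ := exists_eq_ciInf_of_finite (f := f)
  obtain ⟨i₁, hi₁⟩ := exists_eq_ciSup_of_finite (f := f)
  have upper : ∀ i, (cyclicStep a b)^[e] f i ≤ (⨆ j, f j) - min a b ^ e * spread f := by
    intro i
    have h := min_pow_mul_le_iterate_cyclicStep ha hb (g := fun j => (⨆ j, f j) + -1 * f j)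
      (fun j => by
        simp only [Pi.zero_apply]; linarith [le_ciSup (Finite.bddAbove_range f) j]) i i₀
    rw [iterate_cyclicStep_affine hab, hi₀] at h
    rw [spread]; linarith
  have lower : ∀ i, (⨅ j, f j) + min a b ^ e * spread f ≤ (cyclicStep a b)^[e] f i := by
    intro i
    have h := min_pow_mul_le_iterate_cyclicStep ha hb (g := fun j => -(⨅ j, f j) + 1 * f j)
      (fun j => by
        simp only [Pi.zero_apply]; linarith [ciInf_le (Finite.bddBelow_range f) j]) i i₁
    rw [iterate_cyclicStep_affine hab, hi₁] at h
    rw [spread]; linarith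
  have := ciSup_le upper
  have := le_ciInf lower
  simp only [spread] at *
  linarith

theorem tendsto_spread_iterate_cyclicStep (ha : 0 < a) (hb : 0 < b) (hab : a + b = 1)
    (f : ZMod e → ℝ) : Tendsto (fun n => spread ((cyclicStep a b)^[n] f)) atTop (𝓝 0) := by
  set ρ := 1 - 2 * min a b ^ e
  have hmin : 0 < min a b := lt_min ha hb
  have hmin_half : min a b ≤ 1 / 2 := by linarith [min_le_left a b, min_le_right a b]
  have hρ₀ : 0 ≤ ρ := by linarith [pow_le_of_le_one hmin.le (by linarith) (NeZero.ne e)]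
  have hρ₁ : ρ < 1 := by linarith [pow_pos hmin e]
  have hanti : Antitone fun n => spread ((cyclicStep a b)^[n] f) :=
    antitone_nat_of_succ_le fun n => by
      rw [Function.iterate_succ_apply']; exact spread_cyclicStep_le ha.le hb.le hab _
  have hgeom : ∀ j, spread ((cyclicStep a b)^[e * j] f) ≤ ρ ^ j * spread f := by
    intro j
    induction j with
    | zero => simp
    | succ j ih =>
      rw [Nat.mul_succ, add_comm, Function.iterate_add_apply]
      calc _ ≤ ρ * spread ((cyclicStep a b)^[e * j] f) :=
            spread_iterate_cyclicStep_le ha.le hb.le hab _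
        _ ≤ ρ * (ρ ^ j * spread f) := mul_le_mul_of_nonneg_left ih hρ₀
        _ = ρ ^ (j + 1) * spread f := by ring
  refine squeeze_zero (fun n => spread_nonneg _)
    (fun n => (hanti (Nat.mul_div_le n e)).trans (hgeom (n / e))) ?_
  simpa using ((tendsto_pow_atTop_nhds_zero_of_lt_one hρ₀ hρ₁).comp
    (Nat.tendsto_div_const_atTop (NeZero.ne e))).mul_const (spread f)

theorem tendsto_iterate_cyclicStep (ha : 0 < a) (hb : 0 < b) (hab : a + b = 1)
    (f : ZMod e → ℝ) (i : ZMod e) :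
    Tendsto (fun n => (cyclicStep a b)^[n] f i) atTop (𝓝 ((∑ j, f j) / e)) := by
  rw [tendsto_iff_norm_sub_tendsto_zero]
  refine squeeze_zero (fun n => norm_nonneg _) (fun n => ?_)
    (tendsto_spread_iterate_cyclicStep ha hb hab f)
  have h := abs_sub_mean_le_spread ((cyclicStep a b)^[n] f) i
  rwa [sum_iterate_cyclicStep hab, ZMod.card] at h

end Contraction

theorem sum_ite_le_mul_eq_sum_ite_zmod {M : Type*} [AddCommMonoid M] {e k n : ℕ} (hk : k < e)
    (F : ℕ → M) (hF : ∀ j, n < j → F j = 0) (G : ℕ → M)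
    (hG : ∀ h, k ≤ e * h → G h = F (e * h - k)) :
    ∑ h ∈ range (n + 1), (if k ≤ e * h then G h else 0) =
      ∑ j ∈ range (n + 1), if (j : ZMod e) = -k then F j else 0 := by
  rw [← sum_filter, ← sum_filter]
  refine sum_bij_ne_zero (fun h _ _ => e * h - k) ?_ ?_ ?_ ?_
  · intro h hh hne
    have hkh := (mem_filter.1 hh).2
    refine mem_filter.2 ⟨mem_range_succ_iff.2 ?_, ?_⟩
    · by_contra hlt
      exact hne (by rw [hG h hkh, hF _ (not_le.1 hlt)])
    · rw [Nat.cast_sub hkh, Nat.cast_mul, ZMod.natCast_self, zero_mul, zero_sub]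
  · intro h₁ hh₁ _ h₂ hh₂ _ (heq : e * h₁ - k = e * h₂ - k)
    have := (mem_filter.1 hh₁).2
    have := (mem_filter.1 hh₂).2
    exact Nat.eq_of_mul_eq_mul_left (show 0 < e by omega) (by omega)
  · intro j hj hne
    obtain ⟨hjn, hjk⟩ := mem_filter.1 hj
    obtain ⟨h, hh⟩ : e ∣ j + k := by
      rw [← ZMod.natCast_eq_zero_iff]; push_cast; rw [hjk, neg_add_cancel]
    have hjn := mem_range_succ_iff.1 hjn
    have hhn : h ≤ n := by
      by_contra hlt
      nlinarith
    refine ⟨h, mem_filter.2 ⟨mem_range_succ_iff.2 hhn, by omega⟩, ?_, by omega⟩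
    rwa [hG h (by omega), show e * h - k = j by omega]
  · intro h hh _
    exact hG h (mem_filter.1 hh).2

theorem mu_mul_pow_eq_iterate_cyclicStep {e k : ℕ} (hk : k < e) {d : ℤ} (z : ℤ) {r : ℝ}
    (hr : r ^ e = d) (n : ℕ) :
    r ^ k * mu e k d z n =
      (cyclicStep (z : ℝ) (r ^ (e - 1)))^[n] (Pi.single 0 1) (-(k : ZMod e)) := by
  have hcond : ∀ j : ℕ, -(k : ZMod e) - j = 0 ↔ (j : ZMod e) = -k := fun j => by
    rw [sub_eq_zero, eq_comm]
  simp only [iterate_cyclicStep_apply, Pi.single_apply, hcond, mul_ite, mul_one, mul_zero, mu,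
    Int.cast_sum, apply_ite (Int.cast : ℤ → ℝ), Int.cast_mul, Int.cast_pow, Int.cast_natCast,
    Int.cast_zero, mul_sum, ← hr]
  refine sum_ite_le_mul_eq_sum_ite_zmod hk _ (fun j hj => by simp [Nat.choose_eq_zero_of_lt hj])
    _ fun h hkh => ?_
  have hkh' : k ≤ (e - 1) * h := by
    rcases Nat.eq_zero_or_pos h with rfl | hpos
    · simpa using hkh
    · exact (Nat.le_pred_of_lt hk).trans (Nat.le_mul_of_pos_right _ hpos)
  have hexp : k + e * ((e - 1) * h - k) = (e - 1) * (e * h - k) := by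
    zify [hkh, hkh', (by omega : 1 ≤ e)]; ring
  rw [show n + k - e * h = n - (e * h - k) by omega, ← pow_mul, ← pow_mul, ← hexp, pow_add]
  ring

theorem tendsto_mu_div_pow {e k : ℕ} (hk : k < e) {d z : ℤ} {r : ℝ} (hr₀ : 0 < r)
    (hr : r ^ e = d) (hz : 0 < z) :
    Tendsto (fun n => (mu e k d z n : ℝ) / (z + r ^ (e - 1)) ^ n) atTop
      (𝓝 (1 / (e * r ^ k))) := by
  have : NeZero e := ⟨by omega⟩
  set s : ℝ := z + r ^ (e - 1)
  have hz' : (0 : ℝ) < z := Int.cast_pos.2 hz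
  have hs : 0 < s := by positivity
  have hwalk := tendsto_iterate_cyclicStep (a := z / s) (b := r ^ (e - 1) / s) (by positivity)
    (by positivity) (by rw [← add_div, div_self hs.ne']) (Pi.single 0 1) (-(k : ZMod e))
  have hmu : ∀ n, r ^ k * mu e k d z n =
      s ^ n * (cyclicStep (z / s) (r ^ (e - 1) / s))^[n] (Pi.single 0 1) (-(k : ZMod e)) := by
    intro n
    rw [mu_mul_pow_eq_iterate_cyclicStep hk z hr, ← iterate_cyclicStep_mul,
      mul_div_cancel₀ _ hs.ne', mul_div_cancel₀ _ hs.ne']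
  rw [Finset.sum_pi_single', if_pos (mem_univ _)] at hwalk
  convert hwalk.div_const (r ^ k) using 1
  · funext n
    rw [div_eq_div_iff (pow_pos hs n).ne' (pow_pos hr₀ k).ne', mul_comm _ (r ^ k), hmu, mul_comm]
  · rw [div_div]

theorem mu_ratio_tendsto_root_general (e : ℕ) (he : 2 ≤ e) (d : ℤ) (hd : 1 ≤ d)
    (z : ℤ) (hz : 1 ≤ z)
    (k : ℕ) (hk : k ≤ e - 2) :
    Tendsto (fun n : ℕ => (mu e k d z n : ℝ) / (mu e (e - 1) d z n : ℝ))
      atTop (𝓝 ((d : ℝ) ^ (((e : ℝ) - (k : ℝ) - 1) / (e : ℝ)))) := by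
  have hd₀ : (0 : ℝ) < d := Int.cast_pos.2 (by omega)
  set r : ℝ := (d : ℝ) ^ (e⁻¹ : ℝ) with hr_def
  have hr₀ : 0 < r := Real.rpow_pos_of_pos hd₀ _
  have hr : r ^ e = d := Real.rpow_inv_natCast_pow hd₀.le (by omega)
  have hmu : ∀ j < e, Tendsto (fun n => (mu e j d z n : ℝ) / (z + r ^ (e - 1)) ^ n) atTop
      (𝓝 (1 / (e * r ^ j))) := fun j hj => tendsto_mu_div_pow hj hr₀ hr (by omega)
  have hratio : 1 / (e * r ^ k) / (1 / (e * r ^ (e - 1))) = r ^ (e - 1 - k) := by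
    rw [← Nat.sub_add_cancel (show k ≤ e - 1 by omega), pow_add, Nat.add_sub_cancel]
    field_simp
  have hroot : r ^ (e - 1 - k) = (d : ℝ) ^ (((e : ℝ) - k - 1) / e) := by
    rw [hr_def, ← Real.rpow_natCast, ← Real.rpow_mul hd₀.le, Nat.cast_sub (by omega),
      Nat.cast_sub (by omega)]
    congr 1
    push_cast
    ring
  rw [← hroot, ← hratio]
  refine ((hmu k (by omega)).div (hmu (e - 1) (by omega)) (by positivity)).congr fun n => ?_
  exact div_div_div_cancel_right₀ (pow_pos (by positivity) n).ne' _ _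

/-- If `d ≥ 1` is not an `e`-th power and `z ≥ 1`, then for `0 ≤ k ≤ e−2` the
ratio `μ_n(e,k,d,z) / μ_n(e,e−1,d,z)` tends to `d^{(e−k−1)/e}` as `n → ∞`. -/
theorem mu_ratio_tendsto_root (e : ℕ) (he : 2 ≤ e) (d : ℤ) (hd : 1 ≤ d)
    (hdpow : ¬ ∃ m : ℤ, m ^ e = d) (z : ℤ) (hz : 1 ≤ z)
    (k : ℕ) (hk : k ≤ e - 2) :
    Tendsto (fun n : ℕ => (mu e k d z n : ℝ) / (mu e (e - 1) d z n : ℝ))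
      atTop (𝓝 ((d : ℝ) ^ (((e : ℝ) - (k : ℝ) - 1) / (e : ℝ)))) :=
  mu_ratio_tendsto_root_general e he d hd z hz k hk
end

section
/- Let d ≥ 1 be an integer that is not a perfect cube and let z ≥ 1 be an integer. Then lim_{n→∞} μ_n(3,0,d,z)/μ_n(3,2,d,z) = d^{2/3} (the real cube root of d²) and lim_{n→∞} μ_n(3,1,d,z)/μ_n(3,2,d,z) = d^{1/3} (the real cube root of d). -/
/-!
Put `y = d^{2/3}`, so that `y³ = d²`. Sorting the binomial expansion of `(z + y)^n` by the residue
of the exponent mod 3 gives `(z + y)^n = A_n + B_n y + C_n y²` with `A_n = μ_n(3,0,d,z)`,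
`B_n = μ_n(3,2,d,z)` and `d C_n = μ_n(3,1,d,z)`. The same holds with `y` replaced by `ω y` and
`ω² y` for a primitive cube root of unity `ω`, so the roots-of-unity filter writes each of `3 A_n`,
`3 B_n y`, `3 C_n y²` as `(z + y)^n` plus multiples of `(z + ω y)^n` and `(z + ω² y)^n`. Since
`|z + ω y| = |z + ω² y| < z + y`, all three are asymptotic to `(z + y)^n / 3`; hence
`A_n / B_n → y = d^{2/3}` and `d C_n / B_n → d / y = d^{1/3}`.
-/

open Filter Topology

open Finset

theorem Finset.sum_range_mul_eq_sum_sum {M : Type*} [AddCommMonoid M] (f : ℕ → M) (e m : ℕ) :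
    ∑ j ∈ range (e * m), f j = ∑ h ∈ range m, ∑ r ∈ range e, f (e * h + r) := by
  induction m with
  | zero => simp
  | succ m ih => rw [Nat.mul_succ, sum_range_add, ih, sum_range_succ]

section Multisection

variable {R : Type*} [CommSemiring R]

def binomialMultisection (e : ℕ) (c z : R) (r n : ℕ) : R :=
  ∑ h ∈ range (n + 1), (n.choose (e * h + r) : R) * c ^ h * z ^ (n - (e * h + r))

theorem map_binomialMultisection {S : Type*} [CommSemiring S] (f : R →+* S) (e : ℕ) (c z : R)
    (r n : ℕ) : f (binomialMultisection e c z r n) = binomialMultisection e (f c) (f z) r n := by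
  simp [binomialMultisection]

theorem add_pow_eq_sum_binomialMultisection {e : ℕ} (he : 0 < e) {c y : R} (hy : y ^ e = c)
    (z : R) (n : ℕ) : (z + y) ^ n = ∑ r ∈ range e, binomialMultisection e c z r n * y ^ r := by
  have hsub : range (n + 1) ⊆ range (e * (n + 1)) :=
    range_subset_range.2 (Nat.le_mul_of_pos_left _ he)
  have hvanish : ∀ j ∈ range (e * (n + 1)), j ∉ range (n + 1) →
      y ^ j * z ^ (n - j) * (n.choose j : R) = 0 := fun j _ hj => by
    rw [Nat.choose_eq_zero_of_lt (by simpa using hj), Nat.cast_zero, mul_zero]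
  -- pad the binomial sum with zero terms up to `e (n + 1)` and cut it into blocks of length `e`
  rw [add_comm, add_pow, sum_subset hsub hvanish, sum_range_mul_eq_sum_sum, sum_comm]
  refine sum_congr rfl fun r _ => ?_
  rw [binomialMultisection, sum_mul]
  refine sum_congr rfl fun h _ => ?_
  rw [pow_add, pow_mul, hy]
  ring

end Multisection

@[simp, norm_cast]
theorem Int.cast_binomialMultisection {R : Type*} [CommRing R] (e : ℕ) (c z : ℤ) (r n : ℕ) :
    ((binomialMultisection e c z r n : ℤ) : R) = binomialMultisection e (c : R) (z : R) r n :=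
  map_binomialMultisection (Int.castRingHom R) e c z r n

@[simp, norm_cast]
theorem Complex.ofReal_binomialMultisection (e : ℕ) (c z : ℝ) (r n : ℕ) :
    ((binomialMultisection e c z r n : ℝ) : ℂ) = binomialMultisection e (c : ℂ) (z : ℂ) r n :=
  map_binomialMultisection Complex.ofRealHom e c z r n

theorem mu_zero_eq (e : ℕ) (d z : ℤ) (n : ℕ) :
    mu e 0 d z n = binomialMultisection e (d ^ (e - 1)) z 0 n := by
  simp [mu, binomialMultisection, pow_mul]

theorem mu_eq_of_pos {e k : ℕ} (hk : 0 < k) (hke : k < e) (d z : ℤ) (n : ℕ) :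
    mu e k d z n = d ^ (e - 1 - k) * binomialMultisection e (d ^ (e - 1)) z (e - k) n := by
  have hn : n ≤ e * n := Nat.le_mul_of_pos_left n (by omega)
  -- the `h = 0` term of `mu` and the `h = n` term of the multisection vanish; the others match
  -- under `h ↦ h + 1`
  rw [mu, binomialMultisection, sum_range_succ', sum_range_succ,
    Nat.choose_eq_zero_of_lt (show n < e * n + (e - k) by omega), if_neg (by omega)]
  simp only [Nat.cast_zero, zero_mul, add_zero]
  rw [mul_sum]
  refine sum_congr rfl fun h _ => ?_
  have he : e * (h + 1) = e * h + e := by ring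
  have he' : (e - 1) * (h + 1) = (e - 1) * h + (e - 1) := by ring
  rw [if_pos (by omega), he, he', show e * h + e - k = e * h + (e - k) by omega,
    show n + k - (e * h + e) = n - (e * h + (e - k)) by omega,
    show (e - 1) * h + (e - 1) - k = (e - 1 - k) + (e - 1) * h by omega, pow_add, pow_mul]
  ring

theorem Complex.norm_ofReal_add_mul_ofReal_lt {z y : ℝ} (hz : 0 < z) (hy : 0 < y) {u : ℂ}
    (hu : ‖u‖ = 1) (hu1 : u ≠ 1) : ‖(z : ℂ) + u * y‖ < z + y := by
  have hsq : u.re * u.re + u.im * u.im = 1 := by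
    rw [← Complex.normSq_apply, ← Complex.sq_norm, hu, one_pow]
  have hre : u.re < 1 := by
    refine lt_of_le_of_ne (hu ▸ Complex.re_le_norm u) fun h => hu1 (Complex.ext h ?_)
    simpa [h] using hsq
  refine lt_of_pow_lt_pow_left₀ 2 (by positivity) ?_
  rw [Complex.sq_norm, Complex.normSq_apply]
  simp only [Complex.add_re, Complex.add_im, Complex.mul_re, Complex.mul_im, Complex.ofReal_re,
    Complex.ofReal_im, mul_zero, sub_zero, zero_add]
  linear_combination y ^ 2 * hsq + 2 * (mul_pos (mul_pos hz hy) (sub_pos.2 hre))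

theorem tendsto_pow_div_pow_nhds_zero {𝕜 : Type*} [NormedField 𝕜] {p s : 𝕜} (h : ‖p‖ < ‖s‖) :
    Tendsto (fun n : ℕ => p ^ n / s ^ n) atTop (𝓝 0) := by
  have hs : 0 < ‖s‖ := (norm_nonneg p).trans_lt h
  simpa only [div_pow] using tendsto_pow_atTop_nhds_zero_of_norm_lt_one
    (by rwa [norm_div, div_lt_one hs] : ‖p / s‖ < 1)

theorem IsPrimitiveRoot.tendsto_add_pow_mul_pow_div_add_pow {ω : ℂ} {e k : ℕ}
    (hω : IsPrimitiveRoot ω e) (hk : k ≠ 0) (hke : k < e) {z y : ℝ} (hz : 0 < z) (hy : 0 < y) :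
    Tendsto (fun n => ((z : ℂ) + ω ^ k * y) ^ n / ((z : ℂ) + y) ^ n) atTop (𝓝 0) := by
  refine tendsto_pow_div_pow_nhds_zero ?_
  rw [← Complex.ofReal_add, Complex.norm_of_nonneg (by positivity)]
  exact Complex.norm_ofReal_add_mul_ofReal_lt hz hy
    (by rw [norm_pow, hω.norm'_eq_one (by omega), one_pow]) (hω.pow_ne_one_of_pos_of_lt hk hke)

theorem IsPrimitiveRoot.sum_pow_mul_sum_pow_mul_eq_three_mul {R : Type*} [CommRing R] [IsDomain R]
    {ω : R} (hω : IsPrimitiveRoot ω 3) (a : ℕ → R) {r : ℕ} (hr : r < 3) :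
    ∑ k ∈ range 3, ω ^ ((3 - r) * k) * ∑ s ∈ range 3, a s * ω ^ (k * s) = 3 * a r := by
  have h3 := hω.pow_eq_one
  have h0 : 1 + ω + ω ^ 2 = 0 := by
    simpa [sum_range_succ, add_assoc] using hω.geom_sum_eq_zero (by norm_num)
  interval_cases r <;> simp only [sum_range_succ, sum_range_zero] <;> grind

theorem IsPrimitiveRoot.three_mul_binomialMultisection_mul_pow {R : Type*} [CommRing R]
    [IsDomain R] {ω c y : R} (hω : IsPrimitiveRoot ω 3) (hc : y ^ 3 = c) (z : R) {r : ℕ}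
    (hr : r < 3) (n : ℕ) :
    3 * (binomialMultisection 3 c z r n * y ^ r)
      = ∑ k ∈ range 3, ω ^ ((3 - r) * k) * (z + ω ^ k * y) ^ n := by
  rw [← hω.sum_pow_mul_sum_pow_mul_eq_three_mul
    (fun s => binomialMultisection 3 c z s n * y ^ s) hr]
  refine sum_congr rfl fun k _ => ?_
  have hck : (ω ^ k * y) ^ 3 = c := by
    rw [mul_pow, ← pow_mul, mul_comm k, pow_mul, hω.pow_eq_one, one_pow, one_mul, hc]
  rw [add_pow_eq_sum_binomialMultisection three_pos hck]
  congr 1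
  refine sum_congr rfl fun s _ => ?_
  ring

theorem tendsto_binomialMultisection_mul_pow_div {c z y : ℝ} (hz : 0 < z) (hy : 0 < y)
    (hc : y ^ 3 = c) {r : ℕ} (hr : r < 3) :
    Tendsto (fun n => binomialMultisection 3 c z r n * y ^ r / (z + y) ^ n) atTop (𝓝 (1 / 3)) := by
  set ω : ℂ := Complex.exp (2 * Real.pi * Complex.I / (3 : ℕ))
  have hω : IsPrimitiveRoot ω 3 := Complex.isPrimitiveRoot_exp 3 (by norm_num)
  set q : ℕ → ℕ → ℂ := fun k n => ((z : ℂ) + ω ^ k * y) ^ n / ((z : ℂ) + y) ^ n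
  have hratio : ∀ n, ((binomialMultisection 3 c z r n * y ^ r / (z + y) ^ n : ℝ) : ℂ)
      = (1 + ω ^ (3 - r) * q 1 n + ω ^ (2 * (3 - r)) * q 2 n) / 3 := fun n => by
    have hfilter := hω.three_mul_binomialMultisection_mul_pow (y := (y : ℂ)) (c := (c : ℂ))
      (by exact_mod_cast hc) (z : ℂ) hr n
    have hzy : (z : ℂ) + y ≠ 0 := by exact_mod_cast (by positivity : z + y ≠ 0)
    simp only [sum_range_succ, sum_range_zero, zero_add, mul_zero, pow_zero, one_mul,
      mul_one] at hfilter
    simp only [q]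
    push_cast
    field_simp
    linear_combination hfilter
  have hq1 := hω.tendsto_add_pow_mul_pow_div_add_pow one_ne_zero (by norm_num) hz hy
  have hq2 := hω.tendsto_add_pow_mul_pow_div_add_pow two_ne_zero (by norm_num) hz hy
  have hlim : Tendsto (fun n => (1 + ω ^ (3 - r) * q 1 n + ω ^ (2 * (3 - r)) * q 2 n) / 3) atTop
      (𝓝 ((1 + ω ^ (3 - r) * 0 + ω ^ (2 * (3 - r)) * 0) / 3)) :=
    ((tendsto_const_nhds.add (hq1.const_mul _)).add (hq2.const_mul _)).div_const 3
  rw [← tendsto_ofReal_iff]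
  simp only [hratio]
  convert hlim using 2
  simp

theorem tendsto_div_of_tendsto_mul_div {α 𝕜 : Type*} [NormedField 𝕜] {l : Filter α}
    {f g S : α → 𝕜} {u v L : 𝕜} (hu : u ≠ 0) (hL : L ≠ 0)
    (hf : Tendsto (fun n => f n * u / S n) l (𝓝 L))
    (hg : Tendsto (fun n => g n * v / S n) l (𝓝 L)) :
    Tendsto (fun n => f n / g n) l (𝓝 (v / u)) := by
  have h := (hf.div hg hL).const_mul (v / u)
  rw [div_self hL, mul_one] at h
  refine h.congr' ((hg.eventually_ne hL).mono fun n hn => ?_)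
  obtain ⟨⟨hg0, hv⟩, hS⟩ : (g n ≠ 0 ∧ v ≠ 0) ∧ S n ≠ 0 := by simpa [not_or] using hn
  simp only [Pi.div_apply]
  field_simp

theorem mu_ratio_tendsto_cbrt_general (d : ℤ) (hd : 1 ≤ d) (z : ℤ) (hz : 1 ≤ z) :
    Tendsto (fun n : ℕ => (mu 3 0 d z n : ℝ) / (mu 3 2 d z n : ℝ))
        atTop (𝓝 ((d : ℝ) ^ ((2 : ℝ) / 3))) ∧
    Tendsto (fun n : ℕ => (mu 3 1 d z n : ℝ) / (mu 3 2 d z n : ℝ))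
        atTop (𝓝 ((d : ℝ) ^ ((1 : ℝ) / 3))) := by
  have hd0 : (0 : ℝ) < d := Int.cast_pos.2 (by omega)
  have hz0 : (0 : ℝ) < z := Int.cast_pos.2 (by omega)
  set b : ℝ := (d : ℝ) ^ ((2 : ℝ) / 3)
  have hb : 0 < b := Real.rpow_pos_of_pos hd0 _
  have hb3 : b ^ 3 = (d : ℝ) ^ 2 := by
    rw [← Real.rpow_natCast, ← Real.rpow_mul hd0.le]; norm_num
  have hdb : (d : ℝ) / b = (d : ℝ) ^ ((1 : ℝ) / 3) := by
    rw [div_eq_iff hb.ne', ← Real.rpow_add hd0]; norm_num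
  set T : ℕ → ℕ → ℝ := fun r n => binomialMultisection 3 ((d : ℝ) ^ 2) z r n
  have hT : ∀ r, r < 3 → Tendsto (fun n => T r n * b ^ r / (z + b) ^ n) atTop (𝓝 (1 / 3)) :=
    fun r hr => tendsto_binomialMultisection_mul_pow_div hz0 hb hb3 hr
  have hmu0 : ∀ n, (mu 3 0 d z n : ℝ) = T 0 n := fun n => by simp [T, mu_zero_eq]
  have hmu1 : ∀ n, (mu 3 1 d z n : ℝ) = d * T 2 n := fun n => by simp [T, mu_eq_of_pos]
  have hmu2 : ∀ n, (mu 3 2 d z n : ℝ) = T 1 n := fun n => by simp [T, mu_eq_of_pos]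
  have h01 := tendsto_div_of_tendsto_mul_div (by positivity) (by norm_num)
    (hT 0 (by norm_num)) (hT 1 (by norm_num))
  have h21 := tendsto_div_of_tendsto_mul_div (by positivity) (by norm_num)
    (hT 2 (by norm_num)) (hT 1 (by norm_num))
  constructor
  · simpa [hmu0, hmu2] using h01
  · convert h21.const_mul (d : ℝ) using 1
    · simp [hmu1, hmu2, mul_div_assoc]
    · rw [← hdb]; field_simp

/-- If `d ≥ 1` is not a perfect cube and `z ≥ 1`, then
`μ_n(3,0,d,z)/μ_n(3,2,d,z) → d^{2/3}` and `μ_n(3,1,d,z)/μ_n(3,2,d,z) → d^{1/3}`. -/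
theorem mu_ratio_tendsto_cbrt (d : ℤ) (hd : 1 ≤ d) (hdcube : ¬ ∃ m : ℤ, m ^ 3 = d)
    (z : ℤ) (hz : 1 ≤ z) :
    Tendsto (fun n : ℕ => (mu 3 0 d z n : ℝ) / (mu 3 2 d z n : ℝ))
        atTop (𝓝 ((d : ℝ) ^ ((2 : ℝ) / 3))) ∧
    Tendsto (fun n : ℕ => (mu 3 1 d z n : ℝ) / (mu 3 2 d z n : ℝ))
        atTop (𝓝 ((d : ℝ) ^ ((1 : ℝ) / 3))) :=
  mu_ratio_tendsto_cbrt_general d hd z hz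
end

section
/- Let d ≥ 1 and z ≥ 1 be integers, and set α = z + d^{2/3} (where d^{2/3} is the real cube root of d²). Then lim_{n→∞} μ_n(3,0,d,z)/α^n = 1/3, lim_{n→∞} μ_n(3,1,d,z)/α^n = 1/(3·d^{1/3}), and lim_{n→∞} μ_n(3,2,d,z)/α^n = 1/(3·d^{2/3}). -/
open Filter Topology

lemma mu_zero0 (d z : ℤ) : mu 3 0 d z 0 = 1 := by simp [mu]
lemma mu_zero1 (d z : ℤ) : mu 3 1 d z 0 = 0 := by simp [mu]
lemma mu_zero2 (d z : ℤ) : mu 3 2 d z 0 = 0 := by simp [mu]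

lemma term0 (d z : ℤ) (n h' : ℕ) :
    ((n+1).choose (3*(h'+1)) : ℤ) * d ^ (2*(h'+1)) * z ^ (n+1-3*(h'+1)) =
      z * ((n.choose (3*(h'+1)) : ℤ) * d ^ (2*(h'+1)) * z ^ (n-3*(h'+1))) +
      d * ((n.choose (3*(h'+1)-1) : ℤ) * d ^ (2*(h'+1)-1) * z ^ (n+1-3*(h'+1))) := by
  rcases le_or_gt (3*h'+3) n with hle | hlt
  · obtain ⟨m, rfl⟩ : ∃ m, n = 3*h'+3+m := ⟨n-(3*h'+3), by omega⟩
    simp only [show 3*(h'+1) = (3*h'+2)+1 from by ring, Nat.choose_succ_succ' ]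
    push_cast
    rw [show 3*h'+3+m - (3*h'+2) = m+1 from by omega,
        show 3*h'+3+m - (3*h'+2+1) = m from by omega,
        show 2*(h'+1) - 1 = 2*h'+1 from by omega,
        show 2*(h'+1) = 2*h'+1+1 from by omega]
    ring
  · have hc : n.choose (3*h'+2+1) = 0 := Nat.choose_eq_zero_of_lt (by omega)
    simp only [show 3*(h'+1) = (3*h'+2)+1 from by ring, Nat.choose_succ_succ', hc]
    push_cast
    rw [show 2*(h'+1) - 1 = 2*h'+1 from by omega,
        show 2*(h'+1) = 2*h'+1+1 from by omega]
    ring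

lemma term1 (d z : ℤ) (n h' : ℕ) :
    ((n+1).choose (3*(h'+1)-1) : ℤ) * d ^ (2*(h'+1)-1) * z ^ (n+1+1-3*(h'+1)) =
      z * ((n.choose (3*(h'+1)-1) : ℤ) * d ^ (2*(h'+1)-1) * z ^ (n+1-3*(h'+1))) +
      d * ((n.choose (3*(h'+1)-2) : ℤ) * d ^ (2*(h'+1)-2) * z ^ (n+2-3*(h'+1))) := by
  rcases le_or_gt (3*h'+2) n with hle | hlt
  · obtain ⟨m, rfl⟩ : ∃ m, n = 3*h'+2+m := ⟨n-(3*h'+2), by omega⟩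
    rw [show 3*(h'+1)-1 = (3*h'+1)+1 from by omega, Nat.choose_succ_succ',
        show 3*(h'+1)-2 = 3*h'+1 from by omega,
        show 3*h'+2+m+1+1-3*(h'+1) = m+1 from by omega,
        show 3*h'+2+m+1-3*(h'+1) = m from by omega,
        show 2*(h'+1)-2 = 2*h' from by omega,
        show 2*(h'+1)-1 = 2*h'+1 from by omega]
    push_cast
    ring
  · have hc : n.choose ((3*h'+1)+1) = 0 := Nat.choose_eq_zero_of_lt (by omega)
    rw [show 3*(h'+1)-1 = (3*h'+1)+1 from by omega, Nat.choose_succ_succ',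
        show 3*(h'+1)-2 = 3*h'+1 from by omega, hc,
        show 2*(h'+1)-2 = 2*h' from by omega,
        show 2*(h'+1)-1 = 2*h'+1 from by omega,
        show n+1+1-3*(h'+1) = n+2-3*(h'+1) from by omega]
    push_cast
    ring

lemma term2 (d z : ℤ) (n h' : ℕ) :
    ((n+1).choose (3*(h'+1)-2) : ℤ) * d ^ (2*(h'+1)-2) * z ^ (n+1+2-3*(h'+1)) =
      z * ((n.choose (3*(h'+1)-2) : ℤ) * d ^ (2*(h'+1)-2) * z ^ (n+2-3*(h'+1))) +
      ((n.choose (3*h') : ℤ) * d ^ (2*h') * z ^ (n-3*h')) := by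
  rcases le_or_gt (3*h'+1) n with hle | hlt
  · obtain ⟨m, rfl⟩ : ∃ m, n = 3*h'+1+m := ⟨n-(3*h'+1), by omega⟩
    rw [show 3*(h'+1)-2 = (3*h')+1 from by omega,
        show (3*h'+1+m)+1 = (3*h'+m+1)+1 from by omega, Nat.choose_succ_succ',
        show 3*h'+m+1 = 3*h'+1+m from by omega,
        show 3*h'+1+m+1+2-3*(h'+1) = m+1 from by omega,
        show 3*h'+1+m+2-3*(h'+1) = m from by omega,
        show 3*h'+1+m-3*h' = m+1 from by omega,
        show 2*(h'+1)-2 = 2*h' from by omega]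
    push_cast
    ring
  · have hc : n.choose ((3*h')+1) = 0 := Nat.choose_eq_zero_of_lt (by omega)
    rcases Nat.lt_or_ge n (3*h') with h | h
    · have h1 : n.choose (3*h') = 0 := Nat.choose_eq_zero_of_lt h
      have h2 : (n+1).choose ((3*h')+1) = 0 := Nat.choose_eq_zero_of_lt (by omega)
      rw [show 3*(h'+1)-2 = (3*h')+1 from by omega, hc, h1, h2]
      push_cast; ring
    · have hn : n = 3*h' := by omega
      subst hn
      rw [show 3*(h'+1)-2 = (3*h')+1 from by omega, Nat.choose_succ_succ', hc,
          Nat.choose_self,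
          show 3*h'+1+2-3*(h'+1) = 0 from by omega,
          show 3*h'+2-3*(h'+1) = 0 from by omega,
          show 3*h'-3*h' = 0 from by omega,
          show 2*(h'+1)-2 = 2*h' from by omega]
      push_cast; ring

lemma mu0_eq (d z : ℤ) (n : ℕ) :
    mu 3 0 d z n = ∑ h ∈ Finset.range (n+1), (n.choose (3*h) : ℤ) * d^(2*h) * z^(n-3*h) := by
  unfold mu; apply Finset.sum_congr rfl; intro h _; norm_num

lemma mu1_eq (d z : ℤ) (n : ℕ) :
    mu 3 1 d z n = ∑ h ∈ Finset.range (n+1),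
      (if 1 ≤ 3*h then (n.choose (3*h-1) : ℤ) * d^(2*h-1) * z^(n+1-3*h) else 0) := by
  unfold mu; apply Finset.sum_congr rfl; intro h _; norm_num

lemma mu2_eq (d z : ℤ) (n : ℕ) :
    mu 3 2 d z n = ∑ h ∈ Finset.range (n+1),
      (if 2 ≤ 3*h then (n.choose (3*h-2) : ℤ) * d^(2*h-2) * z^(n+2-3*h) else 0) := by
  unfold mu; apply Finset.sum_congr rfl; intro h _; norm_num

lemma mu_rec0 (d z : ℤ) (n : ℕ) :
    mu 3 0 d z (n+1) = z * mu 3 0 d z n + d * mu 3 1 d z n := by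
  rw [mu0_eq, mu0_eq, mu1_eq]
  have key : ∀ h ∈ Finset.range (n+1+1),
      ((n+1).choose (3*h) : ℤ) * d^(2*h) * z^(n+1-3*h)
        = z * ((n.choose (3*h) : ℤ) * d^(2*h) * z^(n-3*h))
          + d * (if 1 ≤ 3*h then (n.choose (3*h-1) : ℤ) * d^(2*h-1) * z^(n+1-3*h) else 0) := by
    intro h _
    cases h with
    | zero => simp [pow_succ, mul_comm]
    | succ h' => rw [if_pos (by omega)]; exact term0 d z n h'
  rw [Finset.sum_congr rfl key, Finset.sum_add_distrib,
      Finset.sum_range_succ (n := n+1), Finset.sum_range_succ (n := n+1),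
      ← Finset.mul_sum, ← Finset.mul_sum]
  rw [Nat.choose_eq_zero_of_lt (show n < 3*(n+1) by omega),
      Nat.choose_eq_zero_of_lt (show n < 3*(n+1)-1 by omega)]
  simp

lemma mu_rec1 (d z : ℤ) (n : ℕ) :
    mu 3 1 d z (n+1) = z * mu 3 1 d z n + d * mu 3 2 d z n := by
  rw [mu1_eq, mu1_eq, mu2_eq]
  have key : ∀ h ∈ Finset.range (n+1+1),
      (if 1 ≤ 3*h then ((n+1).choose (3*h-1) : ℤ) * d^(2*h-1) * z^(n+1+1-3*h) else 0)
        = z * (if 1 ≤ 3*h then (n.choose (3*h-1) : ℤ) * d^(2*h-1) * z^(n+1-3*h) else 0)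
          + d * (if 2 ≤ 3*h then (n.choose (3*h-2) : ℤ) * d^(2*h-2) * z^(n+2-3*h) else 0) := by
    intro h _
    cases h with
    | zero => simp
    | succ h' =>
      rw [if_pos (by omega), if_pos (by omega), if_pos (by omega)]
      exact term1 d z n h'
  rw [Finset.sum_congr rfl key, Finset.sum_add_distrib,
      Finset.sum_range_succ (n := n+1), Finset.sum_range_succ (n := n+1),
      ← Finset.mul_sum, ← Finset.mul_sum]
  rw [Nat.choose_eq_zero_of_lt (show n < 3*(n+1)-1 by omega),
      Nat.choose_eq_zero_of_lt (show n < 3*(n+1)-2 by omega)]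
  simp

lemma mu_rec2 (d z : ℤ) (n : ℕ) :
    mu 3 2 d z (n+1) = z * mu 3 2 d z n + mu 3 0 d z n := by
  rw [mu2_eq, mu2_eq, mu0_eq]
  have key : ∀ h ∈ Finset.range (n+1+1),
      (if 2 ≤ 3*h then ((n+1).choose (3*h-2) : ℤ) * d^(2*h-2) * z^(n+1+2-3*h) else 0)
        = z * (if 2 ≤ 3*h then (n.choose (3*h-2) : ℤ) * d^(2*h-2) * z^(n+2-3*h) else 0)
          + (if 1 ≤ h then (n.choose (3*(h-1)) : ℤ) * d^(2*(h-1)) * z^(n-3*(h-1)) else 0) := by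
    intro h _
    cases h with
    | zero => simp
    | succ h' =>
      rw [if_pos (by omega), if_pos (by omega), if_pos (by omega), Nat.add_sub_cancel]
      exact term2 d z n h'
  rw [Finset.sum_congr rfl key, Finset.sum_add_distrib,
      Finset.sum_range_succ (f := fun h => z * (if 2 ≤ 3*h then (n.choose (3*h-2) : ℤ) * d^(2*h-2) * z^(n+2-3*h) else 0)) (n := n+1),
      ← Finset.mul_sum,
      Finset.sum_range_succ' (f := fun h => if 1 ≤ h then (n.choose (3*(h-1)) : ℤ) * d^(2*(h-1)) * z^(n-3*(h-1)) else 0) (n := n+1)]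
  rw [Nat.choose_eq_zero_of_lt (show n < 3*(n+1)-2 by omega)]
  simp

lemma key (d z : ℤ) (hd : 1 ≤ d) (hz : 1 ≤ z) (δ : ℝ) (hδ : 0 < δ) (hδ3 : δ^3 = (d:ℝ)) :
    Tendsto (fun n : ℕ => (mu 3 0 d z n : ℝ) / ((z:ℝ) + δ^2) ^ n) atTop (𝓝 (1/3)) ∧
    Tendsto (fun n : ℕ => (mu 3 1 d z n : ℝ) / ((z:ℝ) + δ^2) ^ n) atTop (𝓝 (1/(3*δ))) ∧
    Tendsto (fun n : ℕ => (mu 3 2 d z n : ℝ) / ((z:ℝ) + δ^2) ^ n) atTop (𝓝 (1/(3*δ^2))) := by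
  have hz' : (1:ℝ) ≤ (z:ℝ) := by exact_mod_cast hz
  set A : ℕ → ℝ := fun n => (mu 3 0 d z n : ℝ) with hA
  set B : ℕ → ℝ := fun n => (mu 3 1 d z n : ℝ) with hB
  set C : ℕ → ℝ := fun n => (mu 3 2 d z n : ℝ) with hC
  have rA : ∀ n, A (n+1) = z * A n + δ^3 * B n := by
    intro n; simp only [hA, hB, mu_rec0, hδ3]; push_cast; ring
  have rB : ∀ n, B (n+1) = z * B n + δ^3 * C n := by
    intro n; simp only [hB, hC, mu_rec1, hδ3]; push_cast; ring
  have rC : ∀ n, C (n+1) = z * C n + A n := by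
    intro n; simp only [hC, hA, mu_rec2]; push_cast; ring
  set α : ℝ := (z:ℝ) + δ^2 with hαd
  have hα : 0 < α := by positivity
  set P : ℕ → ℝ := fun n => A n - δ * B n with hPd
  set Q : ℕ → ℝ := fun n => δ * B n - δ^2 * C n with hQd
  have hS : ∀ n, A n + δ * B n + δ^2 * C n = α ^ n := by
    intro n
    induction n with
    | zero => simp [hA, hB, hC, mu_zero0, mu_zero1, mu_zero2]
    | succ n ih => rw [rA, rB, rC, pow_succ α n, ← ih, hαd]; ring
  have hP : ∀ n, P (n+1) = z * P n + δ^2 * Q n := by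
    intro n; simp only [hPd, hQd, rA, rB]; ring
  have hQ : ∀ n, Q (n+1) = z * Q n - δ^2 * (P n + Q n) := by
    intro n; simp only [hPd, hQd, rB, rC]; ring
  set ρ2 : ℝ := (z:ℝ)^2 - z * δ^2 + δ^4 with hρ2d
  have hρ2 : 0 ≤ ρ2 := by nlinarith [sq_nonneg ((z:ℝ) - δ^2/2), sq_nonneg (δ^2)]
  have hq : ∀ n, P n ^2 + P n * Q n + Q n ^2 = ρ2 ^ n := by
    intro n
    induction n with
    | zero => simp [hPd, hQd, hA, hB, hC, mu_zero0, mu_zero1, mu_zero2]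
    | succ n ih => rw [hP, hQ, pow_succ ρ2 n, ← ih, hρ2d]; ring
  set ρ : ℝ := Real.sqrt ρ2 with hρd
  have hρ0 : 0 ≤ ρ := Real.sqrt_nonneg _
  have hρsq : ∀ n, (ρ ^ n)^2 = ρ2 ^ n := by
    intro n; rw [← pow_mul, mul_comm, pow_mul, Real.sq_sqrt hρ2]
  have hρα : ρ < α := by
    have h1 : ρ2 < α^2 := by rw [hρ2d, hαd]; nlinarith [sq_nonneg δ, hδ]
    calc ρ = Real.sqrt ρ2 := rfl
    _ < Real.sqrt (α^2) := Real.sqrt_lt_sqrt hρ2 h1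
    _ = α := Real.sqrt_sq hα.le
  have hPb : ∀ n, |P n| ≤ 2 * ρ ^ n := by
    intro n
    have h1 : P n ^2 ≤ (2 * ρ ^ n)^2 := by
      have := hq n
      have h2 := sq_nonneg (P n + 2 * Q n)
      have h3 := sq_nonneg (Q n)
      nlinarith [hρsq n]
    have := Real.sqrt_le_sqrt h1
    rwa [Real.sqrt_sq_eq_abs, Real.sqrt_sq (by positivity)] at this
  have hQb : ∀ n, |Q n| ≤ 2 * ρ ^ n := by
    intro n
    have h1 : Q n ^2 ≤ (2 * ρ ^ n)^2 := by
      have := hq n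
      have h2 := sq_nonneg (2 * P n + Q n)
      have h3 := sq_nonneg (P n)
      nlinarith [hρsq n]
    have := Real.sqrt_le_sqrt h1
    rwa [Real.sqrt_sq_eq_abs, Real.sqrt_sq (by positivity)] at this
  have hgen : ∀ (u : ℕ → ℝ) (Cst : ℝ), (∀ n, |u n| ≤ Cst * ρ ^ n) →
      Tendsto (fun n => u n / α ^ n) atTop (𝓝 0) := by
    intro u Cst hu
    apply squeeze_zero_norm (a := fun n => Cst * (ρ/α)^n)
    · intro n
      have hαn : 0 < α ^ n := pow_pos hα n
      rw [Real.norm_eq_abs, abs_div, abs_of_pos hαn, div_pow, div_le_iff₀ hαn]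
      have he : Cst * (ρ ^ n / α ^ n) * α ^ n = Cst * ρ ^ n := by field_simp
      rw [he]; exact hu n
    · have h1 : Tendsto (fun n : ℕ => (ρ/α)^n) atTop (𝓝 0) :=
        tendsto_pow_atTop_nhds_zero_of_lt_one (by positivity) (by rwa [div_lt_one hα])
      simpa using h1.const_mul Cst
  have hfin : ∀ (v : ℕ → ℝ) (L : ℝ) (u : ℕ → ℝ) (Cst : ℝ),
      (∀ n, |u n| ≤ Cst * ρ ^ n) → (∀ n, v n / α ^ n = L + u n / α ^ n) →
      Tendsto (fun n => v n / α ^ n) atTop (𝓝 L) := by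
    intro v L u Cst hu hv
    have h2 := (tendsto_const_nhds (x := L) (f := atTop)).add (hgen u Cst hu)
    rw [add_zero] at h2
    exact h2.congr (fun n => (hv n).symm)
  have hδne : δ ≠ 0 := hδ.ne'
  refine ⟨?_, ?_, ?_⟩
  · refine hfin A (1/3) (fun n => (2*P n + Q n)/3) 2 ?_ ?_
    · intro n
      have h1 := hPb n; have h2 := hQb n
      have h3 : |2*P n + Q n| ≤ 6 * ρ ^ n := by
        calc |2*P n + Q n| ≤ |2*P n| + |Q n| := abs_add_le _ _
        _ ≤ 6 * ρ ^ n := by rw [abs_mul, abs_two]; linarith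
      rw [abs_div, show |(3:ℝ)| = 3 by norm_num]
      linarith
    · intro n
      have hAe : A n = (α ^ n + (2*P n + Q n)) / 3 := by
        simp only [hPd, hQd]; linarith [hS n]
      have hne : α ^ n ≠ 0 := (pow_pos hα n).ne'
      rw [hAe]; field_simp
  · refine hfin B (1/(3*δ)) (fun n => (Q n - P n)/(3*δ)) (4/(3*δ)) ?_ ?_
    · intro n
      have h1 := hPb n; have h2 := hQb n
      have h3 : |Q n - P n| ≤ 4 * ρ ^ n := by
        calc |Q n - P n| ≤ |Q n| + |P n| := abs_sub _ _
        _ ≤ 4 * ρ ^ n := by linarith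
      rw [abs_div, show |3*δ| = 3*δ by rw [abs_of_pos (by positivity)]]
      rw [div_le_iff₀ (by positivity)]
      have he4 : 4 / (3*δ) * ρ ^ n * (3*δ) = 4 * ρ ^ n := by
        field_simp
      rw [he4]; exact h3
    · intro n
      have hBe : B n = (α ^ n + (Q n - P n)) / (3*δ) := by
        rw [eq_div_iff (by positivity : (3*δ:ℝ) ≠ 0)]
        simp only [hPd, hQd]; linarith [hS n]
      have hne : α ^ n ≠ 0 := (pow_pos hα n).ne'
      rw [hBe]; field_simp
  · refine hfin C (1/(3*δ^2)) (fun n => (-P n - 2*Q n)/(3*δ^2)) (2/δ^2) ?_ ?_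
    · intro n
      have h1 := hPb n; have h2 := hQb n
      have h3 : |-P n - 2*Q n| ≤ 6 * ρ ^ n := by
        calc |-P n - 2*Q n| ≤ |-P n| + |2*Q n| := abs_sub _ _
        _ ≤ 6 * ρ ^ n := by rw [abs_neg, abs_mul, abs_two]; linarith
      rw [abs_div, show |3*δ^2| = 3*δ^2 by rw [abs_of_pos (by positivity)]]
      rw [div_le_iff₀ (by positivity)]
      have he6 : 2/δ^2 * ρ ^ n * (3*δ^2) = 6 * ρ ^ n := by
        field_simp; ring
      rw [he6]; exact h3
    · intro n
      have hCe : C n = (α ^ n + (-P n - 2*Q n)) / (3*δ^2) := by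
        rw [eq_div_iff (by positivity : (3*δ^2:ℝ) ≠ 0)]
        simp only [hPd, hQd]; linarith [hS n]
      have hne : α ^ n ≠ 0 := (pow_pos hα n).ne'
      rw [hCe]; field_simp

/-- For `d ≥ 1`, `z ≥ 1` and `α = z + d^{2/3}` one has
`μ_n(3,0,d,z)/α^n → 1/3`, `μ_n(3,1,d,z)/α^n → 1/(3 d^{1/3})` and
`μ_n(3,2,d,z)/α^n → 1/(3 d^{2/3})`. -/
theorem mu_div_alpha_pow_tendsto (d z : ℤ) (hd : 1 ≤ d) (hz : 1 ≤ z)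
    (α : ℝ) (hα : α = (z : ℝ) + (d : ℝ) ^ ((2 : ℝ) / 3)) :
    Tendsto (fun n : ℕ => (mu 3 0 d z n : ℝ) / α ^ n) atTop (𝓝 (1 / 3)) ∧
    Tendsto (fun n : ℕ => (mu 3 1 d z n : ℝ) / α ^ n) atTop
      (𝓝 (1 / (3 * (d : ℝ) ^ ((1 : ℝ) / 3)))) ∧
    Tendsto (fun n : ℕ => (mu 3 2 d z n : ℝ) / α ^ n) atTop
      (𝓝 (1 / (3 * (d : ℝ) ^ ((2 : ℝ) / 3)))) := by
  set δ : ℝ := (d:ℝ) ^ ((1:ℝ)/3) with hδd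
  have hd0 : (0:ℝ) < (d:ℝ) := by exact_mod_cast lt_of_lt_of_le one_pos hd
  have hδ : 0 < δ := Real.rpow_pos_of_pos hd0 _
  have hδ3 : δ ^ 3 = (d:ℝ) := by
    rw [hδd, ← Real.rpow_natCast ((d:ℝ) ^ ((1:ℝ)/3)) 3, ← Real.rpow_mul hd0.le]
    norm_num
  have hδ2 : δ ^ 2 = (d:ℝ) ^ ((2:ℝ)/3) := by
    rw [hδd, ← Real.rpow_natCast ((d:ℝ) ^ ((1:ℝ)/3)) 2, ← Real.rpow_mul hd0.le]
    norm_num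
  obtain ⟨h0, h1, h2⟩ := key d z hd hz δ hδ hδ3
  rw [hα, ← hδ2]
  exact ⟨h0, h1, h2⟩
end

section
/- Let (a_n), (b_n), (c_n), (d_n) be integer sequences with b_n ≠ 0 and d_n ≠ 0 for all n ≥ 0, and let A_n be the first convergent sequence of the bifurcating continued fraction with partial quotients p_n = a_n/b_n and q_n = c_n/d_n. Define the integer sequences t_0 = b_0, t_n = b_0·Π_{i=1}^{n} b_i d_i for n ≥ 1, and s_0 = a_0, s_1 = a_0 a_1 d_1 + b_0 b_1 c_1, s_2 = a_2 d_2 s_1 + b_2 b_1 c_2 d_1 s_0 + b_2 b_1 b_0 d_2 d_1, and s_n = a_n d_n s_{n−1} + b_n b_{n−1} c_n d_{n−1} s_{n−2} + b_n b_{n−1} b_{n−2} d_n d_{n−1} d_{n−2} s_{n−3} for n ≥ 3. Then A_n = s_n / t_n for all n ≥ 0. -/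
/-- The convergent sequences of the bifurcating continued fraction
`[{p_0,p_1,...},{q_0,q_1,...}]`, shifted by two: `bcf p q x0 x1 x2 m = X_{m-2}`,
where `X_{-2} = x0`, `X_{-1} = x1`, `X_0 = x2` and
`X_n = p_n X_{n-1} + q_n X_{n-2} + X_{n-3}` for `n ≥ 1`.
The first convergent sequence is `A_n = bcf p q 0 1 (p 0) (n+2)`. -/
def bcf (p q : ℕ → ℚ) (x0 x1 x2 : ℚ) : ℕ → ℚ
  | 0 => x0
  | 1 => x1
  | 2 => x2
  | n + 3 =>
      p (n + 1) * bcf p q x0 x1 x2 (n + 2) + q (n + 1) * bcf p q x0 x1 x2 (n + 1)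
        + bcf p q x0 x1 x2 n

private lemma bcf_aux2 (A2 C2 S0 S1 B0 B1 B2 D1 D2 : ℚ) (hb0 : B0 ≠ 0) (hb1 : B1 ≠ 0)
    (hb2 : B2 ≠ 0) (hd1 : D1 ≠ 0) (hd2 : D2 ≠ 0) :
    A2 / B2 * (S1 / (B0 * (B1 * D1))) + C2 / D2 * (S0 / B0) + 1
      = (A2 * D2 * S1 + B2 * B1 * C2 * D1 * S0 + B2 * B1 * B0 * D2 * D1)
          / (B0 * (B1 * D1) * (B2 * D2)) := by
  field_simp

private lemma bcf_aux3 (A3 C3 S0 S1 S2 T0 B1 B2 B3 D1 D2 D3 : ℚ)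
    (ht0 : T0 ≠ 0) (hb1 : B1 ≠ 0) (hb2 : B2 ≠ 0) (hb3 : B3 ≠ 0)
    (hd1 : D1 ≠ 0) (hd2 : D2 ≠ 0) (hd3 : D3 ≠ 0) :
    A3 / B3 * (S2 / (T0 * (B1 * D1) * (B2 * D2))) + C3 / D3 * (S1 / (T0 * (B1 * D1)))
        + S0 / T0
      = (A3 * D3 * S2 + B3 * B2 * C3 * D2 * S1 + B3 * B2 * B1 * D3 * D2 * D1 * S0)
          / (T0 * (B1 * D1) * (B2 * D2) * (B3 * D3)) := by
  field_simp

/-- For integer sequences `a, b, c, d` with `b_n ≠ 0 ≠ d_n`, the first convergent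
sequence `A_n` of the bifurcating continued fraction with partial quotients
`p_n = a_n/b_n`, `q_n = c_n/d_n` satisfies `A_n = s_n / t_n`, where
`t_0 = b_0`, `t_n = b_0 Π_{i=1}^n b_i d_i`, and `s` is the integer sequence with
`s_0 = a_0`, `s_1 = a_0 a_1 d_1 + b_0 b_1 c_1`,
`s_2 = a_2 d_2 s_1 + b_2 b_1 c_2 d_1 s_0 + b_2 b_1 b_0 d_2 d_1` and
`s_n = a_n d_n s_{n−1} + b_n b_{n−1} c_n d_{n−1} s_{n−2}
        + b_n b_{n−1} b_{n−2} d_n d_{n−1} d_{n−2} s_{n−3}` for `n ≥ 3`. -/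
theorem bcf_first_convergent_eq (a b c d : ℕ → ℤ)
    (hb : ∀ n, b n ≠ 0) (hd : ∀ n, d n ≠ 0)
    (s t : ℕ → ℤ)
    (hs0 : s 0 = a 0)
    (hs1 : s 1 = a 0 * a 1 * d 1 + b 0 * b 1 * c 1)
    (hs2 : s 2 = a 2 * d 2 * s 1 + b 2 * b 1 * c 2 * d 1 * s 0 + b 2 * b 1 * b 0 * d 2 * d 1)
    (hsn : ∀ n, 3 ≤ n → s n =
      a n * d n * s (n - 1) + b n * b (n - 1) * c n * d (n - 1) * s (n - 2)
        + b n * b (n - 1) * b (n - 2) * d n * d (n - 1) * d (n - 2) * s (n - 3))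
    (ht0 : t 0 = b 0)
    (htn : ∀ n, 1 ≤ n → t n = b 0 * ∏ i ∈ Finset.Icc 1 n, (b i * d i))
    (n : ℕ) :
    bcf (fun i => (a i : ℚ) / (b i : ℚ)) (fun i => (c i : ℚ) / (d i : ℚ))
        0 1 ((a 0 : ℚ) / (b 0 : ℚ)) (n + 2)
      = (s n : ℚ) / (t n : ℚ) := by
  have hbq : ∀ m, (b m : ℚ) ≠ 0 := fun m => Int.cast_ne_zero.mpr (hb m)
  have hdq : ∀ m, (d m : ℚ) ≠ 0 := fun m => Int.cast_ne_zero.mpr (hd m)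
  have htstep : ∀ m, t (m + 1) = t m * (b (m + 1) * d (m + 1)) := by
    intro m
    match m with
    | 0 =>
      rw [htn 1 le_rfl, ht0]
      simp
    | m + 1 =>
      rw [htn (m + 2) (by omega), htn (m + 1) (by omega),
        Finset.prod_Icc_succ_top (by omega : 1 ≤ m + 2)]
      ring
  have htne : ∀ m, (t m : ℚ) ≠ 0 := by
    intro m
    induction m with
    | zero => rw [ht0]; exact hbq 0
    | succ k ih =>
      rw [htstep k]
      push_cast
      exact mul_ne_zero ih (mul_ne_zero (hbq _) (hdq _))
  induction n using Nat.strong_induction_on with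
  | _ n ih =>
    match n with
    | 0 =>
      simp only [bcf, ht0, hs0]
    | 1 =>
      have h1 : t 1 = b 0 * (b 1 * d 1) := by rw [htn 1 le_rfl]; simp
      simp only [bcf, hs1, h1]
      push_cast
      field_simp [hbq 0, hbq 1, hdq 1]
      ring
    | 2 =>
      have e1 := ih 1 (by omega)
      have e0 := ih 0 (by omega)
      have h2 : (t 2 : ℚ) = t 1 * (b 2 * d 2) := by rw [htstep 1]; push_cast; ring
      show (a 2 : ℚ) / b 2 * bcf _ _ 0 1 _ 3 + (c 2 : ℚ) / d 2 * bcf _ _ 0 1 _ 2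
          + bcf _ _ 0 1 _ 1 = (s 2 : ℚ) / t 2
      rw [show bcf (fun i => (a i : ℚ) / b i) (fun i => (c i : ℚ) / d i)
            0 1 ((a 0 : ℚ) / b 0) 1 = 1 from rfl, e1, e0, h2]
      have hs2' : (s 2 : ℚ) = a 2 * d 2 * s 1 + b 2 * b 1 * c 2 * d 1 * s 0
          + b 2 * b 1 * b 0 * d 2 * d 1 := by exact_mod_cast congrArg Int.cast hs2
      rw [hs2']
      have h1 : (t 1 : ℚ) = b 0 * (b 1 * d 1) := by
        rw [htn 1 le_rfl]; push_cast; simp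
      have h0 : (t 0 : ℚ) = b 0 := by exact_mod_cast congrArg Int.cast ht0
      rw [h1, h0]
      exact bcf_aux2 _ _ _ _ _ _ _ _ _ (hbq 0) (hbq 1) (hbq 2) (hdq 1) (hdq 2)
    | (m + 3) =>
      have e2 := ih (m + 2) (by omega)
      have e1 := ih (m + 1) (by omega)
      have e0 := ih m (by omega)
      show (a (m + 3) : ℚ) / b (m + 3) * bcf _ _ 0 1 _ (m + 4)
          + (c (m + 3) : ℚ) / d (m + 3) * bcf _ _ 0 1 _ (m + 3)
          + bcf _ _ 0 1 _ (m + 2) = (s (m + 3) : ℚ) / t (m + 3)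
      rw [e2, e1, e0]
      have hsrec : (s (m + 3) : ℚ) = a (m + 3) * d (m + 3) * s (m + 2)
          + b (m + 3) * b (m + 2) * c (m + 3) * d (m + 2) * s (m + 1)
          + b (m + 3) * b (m + 2) * b (m + 1) * d (m + 3) * d (m + 2) * d (m + 1)
              * s m := by
        have := hsn (m + 3) (by omega)
        simp only [show m + 3 - 1 = m + 2 from rfl, show m + 3 - 2 = m + 1 from rfl,
          show m + 3 - 3 = m from rfl] at this
        exact_mod_cast congrArg Int.cast this
      have h3 : (t (m + 3) : ℚ) = t (m + 2) * (b (m + 3) * d (m + 3)) := by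
        rw [htstep (m + 2)]; push_cast; ring
      have h2 : (t (m + 2) : ℚ) = t (m + 1) * (b (m + 2) * d (m + 2)) := by
        rw [htstep (m + 1)]; push_cast; ring
      have h1 : (t (m + 1) : ℚ) = t m * (b (m + 1) * d (m + 1)) := by
        rw [htstep m]; push_cast; ring
      rw [hsrec, h3, h2, h1]
      exact bcf_aux3 _ _ _ _ _ _ _ _ _ _ _ _ (htne m) (hbq (m + 1)) (hbq (m + 2))
        (hbq (m + 3)) (hdq (m + 1)) (hdq (m + 2)) (hdq (m + 3))
end

section
/- Let d ≥ 1 be an integer that is not a perfect cube and let z ≥ 1 be an integer, and let A_n, B_n, C_n be the convergent sequences of the periodic bifurcating continued fraction [{z, 2z/d, repeat(3dz/(z³+d²), 3z, 3z/d)}, {0, −z²/d, repeat(−3z²/(z³+d²), −3dz²/(z³+d²), −3z²/d)}]. Then the sequence of real numbers A_n/C_n converges to d^{2/3} (the real cube root of d²) and the sequence B_n/C_n converges to d^{1/3} (the real cube root of d), as n → ∞. -/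
/-!
For a cube root `β` of `d`, the form `A_n + B_n β + C_n β²` obeys the same recurrence as the
convergents. Since `γ = z + β²` satisfies `(γ - z)³ = d²`, i.e. `γ³ = 3zγ² - 3z²γ + (z³ + d²)`,
and the partial quotients are tuned to this cubic, the form equals `γ^(n+1)` times a weight
that does not depend on `β`. For the real root `α = d^(1/3)` the base `z + α²` strictly
dominates `|z + ω α²|` and `|z + ω² α²|` (`ω` a primitive cube root of unity), so solving the
Vandermonde system at `α, ωα, ω²α` shows that `(A_n : B_n : C_n)` tends to the coefficients of
`(X - ωα)(X - ω²α) = X² + αX + α²`.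
-/

open Filter Topology

theorem eq_pow_mul_of_three_term_rec {R : Type*} [CommRing R] {T P Q ν : ℕ → R} {a b c γ : R}
    (hγ : γ ^ 3 = a * γ ^ 2 + b * γ + c)
    (hT : ∀ n, T (n + 3) = P n * T (n + 2) + Q n * T (n + 1) + T n)
    (hP : ∀ n, P n * ν (n + 2) = a * ν (n + 3)) (hQ : ∀ n, Q n * ν (n + 1) = b * ν (n + 3))
    (hν : ∀ n, ν n = c * ν (n + 3))
    (h0 : T 0 = ν 0) (h1 : T 1 = γ * ν 1) (h2 : T 2 = γ ^ 2 * ν 2) (n : ℕ) :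
    T n = γ ^ n * ν n := by
  suffices ∀ n, T n = γ ^ n * ν n ∧ T (n + 1) = γ ^ (n + 1) * ν (n + 1) ∧
      T (n + 2) = γ ^ (n + 2) * ν (n + 2) from (this n).1
  intro n
  induction n with
  | zero => exact ⟨by simpa using h0, by simpa using h1, h2⟩
  | succ n ih =>
    obtain ⟨e0, e1, e2⟩ := ih
    refine ⟨e1, e2, ?_⟩
    rw [hT, e0, e1, e2]
    linear_combination -(γ ^ n * ν (n + 3)) * hγ + γ ^ (n + 2) * hP n + γ ^ (n + 1) * hQ n
      + γ ^ n * hν n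

theorem Complex.norm_ofReal_add_mul_lt {a b : ℝ} {ζ : ℂ} (ha : 0 < a) (hb : 0 < b)
    (hζ : ‖ζ‖ = 1) (hζ1 : ζ ≠ 1) : ‖(a : ℂ) + ζ * b‖ < a + b := by
  have hre : ζ.re < 1 := by
    have h := Complex.norm_sub_one_sq_eq_of_norm_eq_one hζ
    have : 0 < ‖ζ - 1‖ := norm_pos_iff.mpr (sub_ne_zero.mpr hζ1)
    nlinarith
  have hsq : ζ.re ^ 2 + ζ.im ^ 2 = 1 := by
    have := congrArg (· ^ 2) hζ
    simp only [Complex.sq_norm, Complex.normSq_apply, one_pow] at this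
    linarith
  refine lt_of_pow_lt_pow_left₀ 2 (by positivity) ?_
  rw [Complex.sq_norm, Complex.normSq_apply]
  simp only [Complex.add_re, Complex.ofReal_re, Complex.mul_re, Complex.ofReal_im, Complex.add_im,
    Complex.mul_im, zero_add]
  linear_combination b ^ 2 * hsq + 2 * mul_pos (mul_pos ha hb) (sub_pos.mpr hre)

section DominantEval

variable {𝕜 ι : Type*} [NormedField 𝕜] {l : Filter ι} {A B C S₁ S₂ S₃ : ι → 𝕜} {β₁ β₂ β₃ : 𝕜}

theorem tendsto_coeff_div_eval_of_dominant (h₁₂ : β₁ ≠ β₂) (h₁₃ : β₁ ≠ β₃) (h₂₃ : β₂ ≠ β₃)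
    (hS₁ : ∀ i, S₁ i = A i + B i * β₁ + C i * β₁ ^ 2)
    (hS₂ : ∀ i, S₂ i = A i + B i * β₂ + C i * β₂ ^ 2)
    (hS₃ : ∀ i, S₃ i = A i + B i * β₃ + C i * β₃ ^ 2)
    (hS₁0 : ∀ᶠ i in l, S₁ i ≠ 0)
    (h₂ : Tendsto (fun i => S₂ i / S₁ i) l (𝓝 0)) (h₃ : Tendsto (fun i => S₃ i / S₁ i) l (𝓝 0)) :
    Tendsto (fun i => (A i - β₂ * β₃ * C i) / S₁ i) l (𝓝 0) ∧
      Tendsto (fun i => (B i + (β₂ + β₃) * C i) / S₁ i) l (𝓝 0) ∧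
      Tendsto (fun i => C i / S₁ i) l (𝓝 ((β₁ - β₂) * (β₁ - β₃))⁻¹) := by
  have he : β₃ - β₂ ≠ 0 := sub_ne_zero.2 h₂₃.symm
  -- `A - β₂β₃C` and `B + (β₂ + β₃)C` are the coefficients of the remainder of `A + BX + CX²`
  -- modulo `(X - β₂)(X - β₃)`, so they are read off from `S₂` and `S₃` alone
  have hU : Tendsto (fun i => (A i - β₂ * β₃ * C i) / S₁ i) l (𝓝 0) := by
    have h := ((h₂.const_mul β₃).sub (h₃.const_mul β₂)).div_const (β₃ - β₂)
    rw [mul_zero, mul_zero, sub_zero, zero_div] at h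
    refine h.congr fun i => ?_
    rw [div_eq_iff he, hS₂, hS₃]
    ring
  have hV : Tendsto (fun i => (B i + (β₂ + β₃) * C i) / S₁ i) l (𝓝 0) := by
    have h := (h₃.sub h₂).div_const (β₃ - β₂)
    rw [sub_zero, zero_div] at h
    refine h.congr fun i => ?_
    rw [div_eq_iff he, hS₂, hS₃]
    ring
  refine ⟨hU, hV, ?_⟩
  have hD : (β₁ - β₂) * (β₁ - β₃) ≠ 0 := mul_ne_zero (sub_ne_zero.2 h₁₂) (sub_ne_zero.2 h₁₃)
  have hlim := ((tendsto_const_nhds (x := (1 : 𝕜)).sub hU).sub (hV.mul_const β₁)).div_const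
    ((β₁ - β₂) * (β₁ - β₃))
  rw [sub_zero, zero_mul, sub_zero, one_div] at hlim
  refine hlim.congr' ?_
  filter_upwards [hS₁0] with i hi
  rw [div_eq_iff hD]
  field_simp
  rw [hS₁]
  ring

theorem tendsto_coeff_div_of_dominant_eval (h₁₂ : β₁ ≠ β₂) (h₁₃ : β₁ ≠ β₃) (h₂₃ : β₂ ≠ β₃)
    (hS₁ : ∀ i, S₁ i = A i + B i * β₁ + C i * β₁ ^ 2)
    (hS₂ : ∀ i, S₂ i = A i + B i * β₂ + C i * β₂ ^ 2)
    (hS₃ : ∀ i, S₃ i = A i + B i * β₃ + C i * β₃ ^ 2)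
    (hS₁0 : ∀ᶠ i in l, S₁ i ≠ 0)
    (h₂ : Tendsto (fun i => S₂ i / S₁ i) l (𝓝 0)) (h₃ : Tendsto (fun i => S₃ i / S₁ i) l (𝓝 0)) :
    Tendsto (fun i => A i / C i) l (𝓝 (β₂ * β₃)) ∧
      Tendsto (fun i => B i / C i) l (𝓝 (-(β₂ + β₃))) := by
  obtain ⟨hU, hV, hC⟩ :=
    tendsto_coeff_div_eval_of_dominant h₁₂ h₁₃ h₂₃ hS₁ hS₂ hS₃ hS₁0 h₂ h₃
  have hD : ((β₁ - β₂) * (β₁ - β₃))⁻¹ ≠ 0 :=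
    inv_ne_zero (mul_ne_zero (sub_ne_zero.2 h₁₂) (sub_ne_zero.2 h₁₃))
  have hC0 : ∀ᶠ i in l, C i ≠ 0 := by
    filter_upwards [hC.eventually_ne hD] with i hi
    exact left_ne_zero_of_mul (by simpa [div_eq_mul_inv] using hi)
  have hAC := (tendsto_const_nhds (x := β₂ * β₃)).add (hU.div hC hD)
  have hBC := (tendsto_const_nhds (x := -(β₂ + β₃))).add (hV.div hC hD)
  rw [zero_div, add_zero] at hAC hBC
  constructor
  · refine hAC.congr' ?_
    filter_upwards [hS₁0, hC0] with i hi hCi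
    rw [Pi.div_apply, div_div_div_cancel_right₀ hi]
    field_simp
    ring
  · refine hBC.congr' ?_
    filter_upwards [hS₁0, hC0] with i hi hCi
    rw [Pi.div_apply, div_div_div_cancel_right₀ hi]
    field_simp
    ring

end DominantEval

theorem tendsto_ofReal_add_mul_pow_mul_div {w : ℕ → ℝ} {a b : ℝ} (ha : 0 < a) (hb : 0 < b)
    (hw : ∀ n, w n ≠ 0) {η : ℂ} (hη : ‖η‖ = 1) (hη1 : η ≠ 1) :
    Tendsto (fun n => (a + η * b) ^ n * w n / ((a + b) ^ n * w n)) atTop (𝓝 0) := by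
  have hab : 0 < a + b := add_pos ha hb
  have hlt : ‖((a : ℂ) + η * b) / (a + b : ℝ)‖ < 1 := by
    rw [norm_div, Complex.norm_real, Real.norm_of_nonneg hab.le, div_lt_one hab]
    exact Complex.norm_ofReal_add_mul_lt ha hb hη hη1
  refine (tendsto_pow_atTop_nhds_zero_of_norm_lt_one hlt).congr fun n => ?_
  rw [div_pow, mul_div_mul_right _ _ (by exact_mod_cast hw n)]
  push_cast
  rfl

theorem tendsto_coeff_div_of_forall_cube_root {A B C w : ℕ → ℝ} {z α : ℝ} (hz : 0 < z)
    (hα : 0 < α) (hw : ∀ n, w n ≠ 0)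
    (hS : ∀ β : ℂ, β ^ 3 = α ^ 3 → ∀ n, A n + B n * β + C n * β ^ 2 = (z + β ^ 2) ^ n * w n) :
    Tendsto (fun n => A n / C n) atTop (𝓝 (α ^ 2)) ∧
      Tendsto (fun n => B n / C n) atTop (𝓝 α) := by
  obtain ⟨ζ, hζ⟩ : ∃ ζ : ℂ, IsPrimitiveRoot ζ 3 := ⟨_, Complex.isPrimitiveRoot_exp 3 (by norm_num)⟩
  have hζ3 : ζ ^ 3 = 1 := hζ.pow_eq_one
  have hζ1 : ζ ≠ 1 := hζ.ne_one (by norm_num)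
  have hζ21 : ζ ^ 2 ≠ 1 := hζ.pow_ne_one_of_pos_of_lt two_ne_zero (by norm_num)
  have hζsum : 1 + ζ + ζ ^ 2 = 0 := by
    simpa [Finset.sum_range_succ] using hζ.geom_sum_eq_zero (by norm_num)
  have hα0 : (α : ℂ) ≠ 0 := by exact_mod_cast hα.ne'
  have hzα : (0 : ℝ) < z + α ^ 2 := by positivity
  have hζ4 : (ζ ^ 2 * α) ^ 2 = ζ * α ^ 2 := by linear_combination ζ * α ^ 2 * hζ3
  have h₂ := tendsto_ofReal_add_mul_pow_mul_div hz (pow_pos hα 2) hw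
    (IsPrimitiveRoot.norm'_eq_one (hζ.pow_of_coprime 2 (by norm_num)) three_ne_zero) hζ21
  have h₃ := tendsto_ofReal_add_mul_pow_mul_div hz (pow_pos hα 2) hw
    (hζ.norm'_eq_one three_ne_zero) hζ1
  have key := tendsto_coeff_div_of_dominant_eval (l := atTop) (A := fun n => (A n : ℂ))
    (B := fun n => (B n : ℂ)) (C := fun n => (C n : ℂ)) (β₁ := α) (β₂ := ζ * α) (β₃ := ζ ^ 2 * α)
    (S₁ := fun n => (z + (α : ℂ) ^ 2) ^ n * w n) (S₂ := fun n => (z + (ζ * α) ^ 2) ^ n * w n)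
    (S₃ := fun n => (z + (ζ ^ 2 * α) ^ 2) ^ n * w n)
    (by simpa [hα0] using hζ1)
    (fun h => hζ21 (mul_right_cancel₀ hα0 (by linear_combination -h)))
    (by simpa [hα0, hζ.ne_zero three_ne_zero, pow_two] using hζ1)
    (fun n => (hS α rfl n).symm)
    (fun n => (hS _ (by rw [mul_pow, hζ3, one_mul]) n).symm)
    (fun n => (hS _ (by rw [mul_pow, ← pow_mul, pow_mul', hζ3, one_pow, one_mul]) n).symm)
    (Eventually.of_forall fun n => mul_ne_zero (pow_ne_zero _ (by exact_mod_cast hzα.ne'))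
      (by exact_mod_cast hw n))
    (by simpa only [mul_pow, Complex.ofReal_pow] using h₂)
    (by simpa only [hζ4, Complex.ofReal_pow] using h₃)
  have hAC : ζ * α * (ζ ^ 2 * α) = ((α ^ 2 : ℝ) : ℂ) := by
    push_cast
    linear_combination α ^ 2 * hζ3
  have hBC : -(ζ * α + ζ ^ 2 * α) = (α : ℂ) := by linear_combination -α * hζsum
  rw [hAC, hBC] at key
  refine ⟨tendsto_ofReal_iff.mp ?_, tendsto_ofReal_iff.mp ?_⟩
  · simpa only [Complex.ofReal_div] using key.1
  · simpa only [Complex.ofReal_div] using key.2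

def cbrtWeight (d z : ℚ) (n : ℕ) : ℚ :=
  (z ^ 3 + d ^ 2)⁻¹ ^ (n / 3) * if n % 3 = 2 then d⁻¹ else 1

theorem cbrtWeight_ne_zero {d z : ℚ} (hd : d ≠ 0) (hc : z ^ 3 + d ^ 2 ≠ 0) (n : ℕ) :
    cbrtWeight d z n ≠ 0 := by
  unfold cbrtWeight
  split_ifs <;> simp [hd, hc]

theorem cbrtWeight_eq_mul_add_three {d z : ℚ} (hc : z ^ 3 + d ^ 2 ≠ 0) (n : ℕ) :
    cbrtWeight d z n = (z ^ 3 + d ^ 2) * cbrtWeight d z (n + 3) := by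
  simp only [cbrtWeight, Nat.add_mod_right, Nat.add_div_right n three_pos, pow_succ]
  field_simp

theorem coeff_mul_cbrtWeight_add_two {d z : ℚ} (hd : d ≠ 0) {p : ℕ → ℚ}
    (hp2 : ∀ n, 2 ≤ n → n % 3 = 2 → p n = 3 * d * z / (z ^ 3 + d ^ 2))
    (hp3 : ∀ n, 2 ≤ n → n % 3 = 0 → p n = 3 * z)
    (hp4 : ∀ n, 2 ≤ n → n % 3 = 1 → p n = 3 * z / d) (n : ℕ) :
    p (n + 2) * cbrtWeight d z (n + 2) = 3 * z * cbrtWeight d z (n + 3) := by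
  obtain ⟨j, r, hr, rfl⟩ : ∃ j r, r < 3 ∧ n = 3 * j + r :=
    ⟨n / 3, n % 3, Nat.mod_lt _ three_pos, (Nat.div_add_mod n 3).symm⟩
  interval_cases r <;>
    [rw [hp2 _ (by omega) (by omega)]; rw [hp3 _ (by omega) (by omega)];
      rw [hp4 _ (by omega) (by omega)]] <;>
    simp [cbrtWeight, add_assoc, Nat.mul_add_div, pow_succ] <;> field_simp

theorem coeff_mul_cbrtWeight_add_one {d z : ℚ} (hd : d ≠ 0) {q : ℕ → ℚ}
    (hq2 : ∀ n, 2 ≤ n → n % 3 = 2 → q n = -(3 * z ^ 2) / (z ^ 3 + d ^ 2))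
    (hq3 : ∀ n, 2 ≤ n → n % 3 = 0 → q n = -(3 * d * z ^ 2) / (z ^ 3 + d ^ 2))
    (hq4 : ∀ n, 2 ≤ n → n % 3 = 1 → q n = -(3 * z ^ 2) / d) (n : ℕ) :
    q (n + 2) * cbrtWeight d z (n + 1) = -(3 * z ^ 2) * cbrtWeight d z (n + 3) := by
  obtain ⟨j, r, hr, rfl⟩ : ∃ j r, r < 3 ∧ n = 3 * j + r :=
    ⟨n / 3, n % 3, Nat.mod_lt _ three_pos, (Nat.div_add_mod n 3).symm⟩
  interval_cases r <;>
    [rw [hq2 _ (by omega) (by omega)]; rw [hq3 _ (by omega) (by omega)];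
      rw [hq4 _ (by omega) (by omega)]] <;>
    simp [cbrtWeight, add_assoc, Nat.mul_add_div, pow_succ] <;> field_simp

section ConvergentForm

variable {K : Type*} [Field K] [CharZero K]

def convergentForm (p q : ℕ → ℚ) (β : K) (m : ℕ) : K :=
  bcf p q 0 1 (p 0) m + bcf p q 1 0 (q 0) m * β + bcf p q 0 0 1 m * β ^ 2

theorem convergentForm_add_three (p q : ℕ → ℚ) (β : K) (m : ℕ) :
    convergentForm p q β (m + 3) = p (m + 1) * convergentForm p q β (m + 2)
      + q (m + 1) * convergentForm p q β (m + 1) + convergentForm p q β m := by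
  simp only [convergentForm, bcf]
  push_cast
  ring

theorem convergentForm_succ_eq_pow_mul {d z : ℚ} (hd : d ≠ 0) (hc : z ^ 3 + d ^ 2 ≠ 0)
    {p q : ℕ → ℚ} (hp0 : p 0 = z) (hp1 : p 1 = 2 * z / d) (hq0 : q 0 = 0)
    (hq1 : q 1 = -z ^ 2 / d)
    (hP : ∀ n, p (n + 2) * cbrtWeight d z (n + 2) = 3 * z * cbrtWeight d z (n + 3))
    (hQ : ∀ n, q (n + 2) * cbrtWeight d z (n + 1) = -(3 * z ^ 2) * cbrtWeight d z (n + 3))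
    {β : K} (hβ : β ^ 3 = d) (n : ℕ) :
    convergentForm p q β (n + 1) = (z + β ^ 2) ^ n * cbrtWeight d z n := by
  have hdK : (d : K) ≠ 0 := by exact_mod_cast hd
  refine eq_pow_mul_of_three_term_rec (T := fun n => convergentForm p q β (n + 1))
    (P := fun n => (p (n + 2) : K)) (Q := fun n => (q (n + 2) : K))
    (ν := fun n => (cbrtWeight d z n : K)) (γ := z + β ^ 2)
    (a := 3 * z) (b := -(3 * z ^ 2)) (c := z ^ 3 + d ^ 2) ?_
    (fun n => convergentForm_add_three p q β (n + 1)) (fun n => by exact_mod_cast hP n)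
    (fun n => by exact_mod_cast hQ n)
    (fun n => by exact_mod_cast cbrtWeight_eq_mul_add_three hc n) ?_ ?_ ?_ n
  · -- `γ = z + β²` satisfies `(γ - z)³ = β⁶ = d²`
    linear_combination (β ^ 3 + d) * hβ
  · simp [convergentForm, bcf, cbrtWeight]
  · simp [convergentForm, bcf, cbrtWeight, hp0, hq0]
  · simp only [convergentForm, bcf, cbrtWeight, hp0, hp1, hq0, hq1]
    push_cast
    field_simp
    linear_combination (-β) * hβ

end ConvergentForm

theorem bcf_convergents_tendsto_cbrt_general (d z : ℤ) (hd : 1 ≤ d)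
    (hz : 1 ≤ z)
    (p q : ℕ → ℚ)
    (hp0 : p 0 = (z : ℚ))
    (hp1 : p 1 = 2 * (z : ℚ) / (d : ℚ))
    (hq0 : q 0 = 0)
    (hq1 : q 1 = -(z : ℚ) ^ 2 / (d : ℚ))
    (hp2 : ∀ n, 2 ≤ n → n % 3 = 2 →
      p n = 3 * (d : ℚ) * (z : ℚ) / ((z : ℚ) ^ 3 + (d : ℚ) ^ 2))
    (hq2 : ∀ n, 2 ≤ n → n % 3 = 2 →
      q n = -(3 * (z : ℚ) ^ 2) / ((z : ℚ) ^ 3 + (d : ℚ) ^ 2))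
    (hp3 : ∀ n, 2 ≤ n → n % 3 = 0 → p n = 3 * (z : ℚ))
    (hq3 : ∀ n, 2 ≤ n → n % 3 = 0 →
      q n = -(3 * (d : ℚ) * (z : ℚ) ^ 2) / ((z : ℚ) ^ 3 + (d : ℚ) ^ 2))
    (hp4 : ∀ n, 2 ≤ n → n % 3 = 1 → p n = 3 * (z : ℚ) / (d : ℚ))
    (hq4 : ∀ n, 2 ≤ n → n % 3 = 1 → q n = -(3 * (z : ℚ) ^ 2) / (d : ℚ)) :
    Tendsto (fun n : ℕ =>
        ((bcf p q 0 1 (p 0) (n + 2) : ℚ) : ℝ) / ((bcf p q 0 0 1 (n + 2) : ℚ) : ℝ))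
      atTop (𝓝 ((d : ℝ) ^ ((2 : ℝ) / 3))) ∧
    Tendsto (fun n : ℕ =>
        ((bcf p q 1 0 (q 0) (n + 2) : ℚ) : ℝ) / ((bcf p q 0 0 1 (n + 2) : ℚ) : ℝ))
      atTop (𝓝 ((d : ℝ) ^ ((1 : ℝ) / 3))) := by
  have hd0 : (0 : ℚ) < d := by exact_mod_cast hd
  have hz0 : (0 : ℝ) < z := by exact_mod_cast hz
  have hc : (z : ℚ) ^ 3 + (d : ℚ) ^ 2 ≠ 0 := by positivity
  have hdR : (0 : ℝ) ≤ d := by exact_mod_cast hd0.le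
  set α : ℝ := (d : ℝ) ^ ((1 : ℝ) / 3)
  have hα3 : α ^ 3 = d := by
    rw [← Real.rpow_natCast, ← Real.rpow_mul hdR]
    norm_num
  have hα2 : α ^ 2 = (d : ℝ) ^ ((2 : ℝ) / 3) := by
    rw [← Real.rpow_natCast, ← Real.rpow_mul hdR]
    norm_num
  have hlim := tendsto_coeff_div_of_forall_cube_root
    (A := fun n => (bcf p q 0 1 (p 0) (n + 1) : ℝ)) (B := fun n => (bcf p q 1 0 (q 0) (n + 1) : ℝ))
    (C := fun n => (bcf p q 0 0 1 (n + 1) : ℝ))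
    (w := fun n => (cbrtWeight d z n : ℝ)) (α := α) hz0 (by positivity)
    (fun n => by exact_mod_cast cbrtWeight_ne_zero hd0.ne' hc n) fun β hβ n => by
      have hβd : β ^ 3 = ((d : ℚ) : ℂ) := by rw [hβ]; exact_mod_cast hα3
      simpa [convergentForm] using convergentForm_succ_eq_pow_mul hd0.ne' hc hp0 hp1 hq0 hq1
        (coeff_mul_cbrtWeight_add_two hd0.ne' hp2 hp3 hp4)
        (coeff_mul_cbrtWeight_add_one hd0.ne' hq2 hq3 hq4) hβd n
  rw [hα2] at hlim
  exact ⟨hlim.1.comp (tendsto_add_atTop_nat 1), hlim.2.comp (tendsto_add_atTop_nat 1)⟩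

/-- For `d ≥ 1` not a perfect cube and `z ≥ 1`, the convergents of the periodic
bifurcating continued fraction `[{z, 2z/d, repeat(3dz/(z³+d²), 3z, 3z/d)},
{0, −z²/d, repeat(−3z²/(z³+d²), −3dz²/(z³+d²), −3z²/d)}]` satisfy
`A_n/C_n → d^{2/3}` and `B_n/C_n → d^{1/3}` as `n → ∞`. -/
theorem bcf_convergents_tendsto_cbrt (d z : ℤ) (hd : 1 ≤ d)
    (hdcube : ¬ ∃ m : ℤ, m ^ 3 = d) (hz : 1 ≤ z)
    (p q : ℕ → ℚ)
    (hp0 : p 0 = (z : ℚ))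
    (hp1 : p 1 = 2 * (z : ℚ) / (d : ℚ))
    (hq0 : q 0 = 0)
    (hq1 : q 1 = -(z : ℚ) ^ 2 / (d : ℚ))
    (hp2 : ∀ n, 2 ≤ n → n % 3 = 2 →
      p n = 3 * (d : ℚ) * (z : ℚ) / ((z : ℚ) ^ 3 + (d : ℚ) ^ 2))
    (hq2 : ∀ n, 2 ≤ n → n % 3 = 2 →
      q n = -(3 * (z : ℚ) ^ 2) / ((z : ℚ) ^ 3 + (d : ℚ) ^ 2))
    (hp3 : ∀ n, 2 ≤ n → n % 3 = 0 → p n = 3 * (z : ℚ))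
    (hq3 : ∀ n, 2 ≤ n → n % 3 = 0 →
      q n = -(3 * (d : ℚ) * (z : ℚ) ^ 2) / ((z : ℚ) ^ 3 + (d : ℚ) ^ 2))
    (hp4 : ∀ n, 2 ≤ n → n % 3 = 1 → p n = 3 * (z : ℚ) / (d : ℚ))
    (hq4 : ∀ n, 2 ≤ n → n % 3 = 1 → q n = -(3 * (z : ℚ) ^ 2) / (d : ℚ)) :
    Tendsto (fun n : ℕ =>
        ((bcf p q 0 1 (p 0) (n + 2) : ℚ) : ℝ) / ((bcf p q 0 0 1 (n + 2) : ℚ) : ℝ))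
      atTop (𝓝 ((d : ℝ) ^ ((2 : ℝ) / 3))) ∧
    Tendsto (fun n : ℕ =>
        ((bcf p q 1 0 (q 0) (n + 2) : ℚ) : ℝ) / ((bcf p q 0 0 1 (n + 2) : ℚ) : ℝ))
      atTop (𝓝 ((d : ℝ) ^ ((1 : ℝ) / 3))) :=
  bcf_convergents_tendsto_cbrt_general d z hd hz p q hp0 hp1 hq0 hq1 hp2 hq2 hp3 hq3 hp4 hq4
end

section
/- Let d ≥ 1 and z ≥ 1 be integers and let (a_n), (b_n), (c_n), (d'_n) be the integer numerator/denominator sequences of the periodic bifurcating continued fraction associated with (d,z). Define the integer sequence s by s_0 = a_0, s_1 = a_0 a_1 d'_1 + b_0 b_1 c_1, s_2 = a_2 d'_2 s_1 + b_2 b_1 c_2 d'_1 s_0 + b_2 b_1 b_0 d'_2 d'_1, and s_n = a_n d'_n s_{n−1} + b_n b_{n−1} c_n d'_{n−1} s_{n−2} + b_n b_{n−1} b_{n−2} d'_n d'_{n−1} d'_{n−2} s_{n−3} for n ≥ 3. Then for every n ≥ 2: s_n = d^{⌊2(n+1)/3⌋} · (d² + z³)^{⌊2n/3⌋} · μ_{n+1}(3,0,d,z),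 where ⌊·⌋ denotes the integer floor. -/
/-- Auxiliary sum: the residue-0 part `Σ C(n,3h) d^(2h) z^(n-3h)`. -/
def auxU (d z : ℤ) (n : ℕ) : ℤ :=
  ∑ h ∈ Finset.range (n + 1), (n.choose (3 * h) : ℤ) * d ^ (2 * h) * z ^ (n - 3 * h)

/-- Auxiliary sum: the residue-1 part. -/
def auxV (d z : ℤ) (n : ℕ) : ℤ :=
  ∑ h ∈ Finset.range (n + 1), (n.choose (3 * h + 1) : ℤ) * d ^ (2 * h) * z ^ (n - (3 * h + 1))

/-- Auxiliary sum: the residue-2 part. -/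
def auxW (d z : ℤ) (n : ℕ) : ℤ :=
  ∑ h ∈ Finset.range (n + 1), (n.choose (3 * h + 2) : ℤ) * d ^ (2 * h) * z ^ (n - (3 * h + 2))

lemma auxV_succ (d z : ℤ) (n : ℕ) : auxV d z (n + 1) = z * auxV d z n + auxU d z n := by
  unfold auxU auxV
  rw [Finset.sum_range_succ (n := n + 1), Finset.mul_sum, ← Finset.sum_add_distrib]
  have hz : ((n+1).choose (3 * (n+1) + 1) : ℤ) * d ^ (2*(n+1)) * z ^ ((n+1) - (3*(n+1)+1)) = 0 := by
    rw [Nat.choose_eq_zero_of_lt (by omega)]; push_cast; ring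
  rw [hz, add_zero]
  apply Finset.sum_congr rfl
  intro h _
  have e0 : (n + 1) - (3 * h + 1) = n - 3 * h := by omega
  rw [e0, Nat.choose_succ_succ']
  rcases le_or_gt (3 * h + 1) n with hle | hlt
  · have e1 : n - 3 * h = (n - (3 * h + 1)) + 1 := by omega
    rw [e1, pow_succ]; push_cast; ring
  · rw [Nat.choose_eq_zero_of_lt hlt]; push_cast; ring

lemma auxW_succ (d z : ℤ) (n : ℕ) : auxW d z (n + 1) = z * auxW d z n + auxV d z n := by
  unfold auxV auxW
  rw [Finset.sum_range_succ (n := n + 1), Finset.mul_sum, ← Finset.sum_add_distrib]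
  have hzz : ((n+1).choose (3 * (n+1) + 2) : ℤ) * d ^ (2*(n+1)) * z ^ ((n+1) - (3*(n+1)+2)) = 0 := by
    rw [Nat.choose_eq_zero_of_lt (by omega)]; push_cast; ring
  rw [hzz, add_zero]
  apply Finset.sum_congr rfl
  intro h _
  have e0 : (n + 1) - (3 * h + 2) = n - (3 * h + 1) := by omega
  rw [e0, show 3 * h + 2 = (3 * h + 1) + 1 from rfl, Nat.choose_succ_succ']
  rcases le_or_gt (3 * h + 2) n with hle | hlt
  · have e1 : n - (3 * h + 1) = (n - (3 * h + 2)) + 1 := by omega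
    rw [e1, pow_succ]; push_cast; ring
  · rw [Nat.choose_eq_zero_of_lt (by omega : n < 3 * h + 1 + 1)]; push_cast; ring

lemma auxU_succ (d z : ℤ) (n : ℕ) :
    auxU d z (n + 1) = z * auxU d z n + d ^ 2 * auxW d z n := by
  have hL : auxU d z (n + 1) = z ^ (n+1) + ∑ h ∈ Finset.range (n + 1),
      ((n+1).choose (3*h+3) : ℤ) * d ^ (2*h+2) * z ^ (n - (3*h+2)) := by
    unfold auxU
    rw [Finset.sum_range_succ' (n := n + 1)]
    rw [add_comm]
    congr 1
    · norm_num
    · apply Finset.sum_congr rfl; intro h _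
      rw [show 3 * (h+1) = 3*h+3 from by ring, show 2 * (h+1) = 2*h+2 from by ring,
        show (n+1) - (3*h+3) = n - (3*h+2) from by omega]
  have hR : z * auxU d z n = z ^ (n+1) + ∑ h ∈ Finset.range (n + 1),
      z * ((n.choose (3*h+3) : ℤ) * d ^ (2*h+2) * z ^ (n - (3*h+3))) := by
    unfold auxU
    rw [Finset.sum_range_succ' (n := n), Finset.sum_range_succ, mul_add, Finset.mul_sum]
    have h0 : z * ((n.choose (3*n+3) : ℤ) * d ^ (2*n+2) * z ^ (n - (3*n+3))) = 0 := by
      rw [Nat.choose_eq_zero_of_lt (by omega)]; push_cast; ring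
    rw [h0, add_zero, add_comm]
    congr 1
    · norm_num [pow_succ, mul_comm]
  rw [hL, hR]
  unfold auxW
  rw [Finset.mul_sum, add_assoc]
  congr 1
  rw [← Finset.sum_add_distrib]
  apply Finset.sum_congr rfl
  intro h _
  rw [Nat.choose_succ_succ' (n := n) (k := 3*h+2)]
  rcases le_or_gt (3*h+3) n with hle | hlt
  · rw [show n - (3*h+2) = (n - (3*h+3)) + 1 from by omega, pow_succ]
    push_cast; ring
  · rw [Nat.choose_eq_zero_of_lt (show n < 3*h+2+1 from by omega)]
    push_cast; ring

lemma auxU_rec (d z : ℤ) (n : ℕ) :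
    auxU d z (n + 3) = 3 * z * auxU d z (n + 2) - 3 * z ^ 2 * auxU d z (n + 1)
      + (z ^ 3 + d ^ 2) * auxU d z n := by
  have h1 := auxU_succ d z (n + 2)
  have h2 := auxU_succ d z (n + 1)
  have h3 := auxU_succ d z n
  have h4 := auxW_succ d z (n + 1)
  have h5 := auxW_succ d z n
  have h6 := auxV_succ d z n
  linear_combination h1 - 2*z*h2 + z^2*h3 + d^2*h4 - d^2*z*h5 + d^2*h6

lemma mu_eq_auxU (d z : ℤ) (n : ℕ) : mu 3 0 d z n = auxU d z n := by
  unfold mu auxU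
  apply Finset.sum_congr rfl
  intro h _
  rw [if_pos (Nat.zero_le _)]
  norm_num

lemma auxU_three (d z : ℤ) : auxU d z 3 = z ^ 3 + d ^ 2 := by
  simp [auxU, Finset.sum_range_succ]
  norm_num [Nat.choose]

lemma auxU_four (d z : ℤ) : auxU d z 4 = z ^ 4 + 4 * d ^ 2 * z := by
  simp [auxU, Finset.sum_range_succ]
  norm_num [Nat.choose]

lemma auxU_five (d z : ℤ) : auxU d z 5 = z ^ 5 + 10 * d ^ 2 * z ^ 2 := by
  simp [auxU, Finset.sum_range_succ]
  norm_num [Nat.choose]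

/-- Let `(a_n), (b_n), (c_n), (d'_n)` be the integer numerator/denominator
sequences of the periodic bifurcating continued fraction associated with
`(d,z)`, and let `s` be the integer sequence with `s_0 = a_0`,
`s_1 = a_0 a_1 d'_1 + b_0 b_1 c_1`,
`s_2 = a_2 d'_2 s_1 + b_2 b_1 c_2 d'_1 s_0 + b_2 b_1 b_0 d'_2 d'_1` and
`s_n = a_n d'_n s_{n−1} + b_n b_{n−1} c_n d'_{n−1} s_{n−2}
      + b_n b_{n−1} b_{n−2} d'_n d'_{n−1} d'_{n−2} s_{n−3}` for `n ≥ 3`.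
Then `s_n = d^⌊2(n+1)/3⌋ (d²+z³)^⌊2n/3⌋ μ_{n+1}(3,0,d,z)` for all `n ≥ 2`. -/
theorem s_eq_mu_zero (d z : ℤ) (hd : 1 ≤ d) (hz : 1 ≤ z)
    (a b c d' : ℕ → ℤ)
    (ha0 : a 0 = z) (hb0 : b 0 = 1) (hc0 : c 0 = 0) (hd0 : d' 0 = 1)
    (ha1 : a 1 = 2 * z) (hb1 : b 1 = d) (hc1 : c 1 = -z ^ 2) (hd1 : d' 1 = d)
    (h2 : ∀ n, 2 ≤ n → n % 3 = 2 →
      a n = 3 * d * z ∧ b n = z ^ 3 + d ^ 2 ∧ c n = -(3 * z ^ 2) ∧ d' n = z ^ 3 + d ^ 2)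
    (h0 : ∀ n, 2 ≤ n → n % 3 = 0 →
      a n = 3 * z ∧ b n = 1 ∧ c n = -(3 * d * z ^ 2) ∧ d' n = z ^ 3 + d ^ 2)
    (h1 : ∀ n, 2 ≤ n → n % 3 = 1 →
      a n = 3 * z ∧ b n = d ∧ c n = -(3 * z ^ 2) ∧ d' n = d)
    (s : ℕ → ℤ)
    (hs0 : s 0 = a 0)
    (hs1 : s 1 = a 0 * a 1 * d' 1 + b 0 * b 1 * c 1)
    (hs2 : s 2 = a 2 * d' 2 * s 1 + b 2 * b 1 * c 2 * d' 1 * s 0 + b 2 * b 1 * b 0 * d' 2 * d' 1)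
    (hsn : ∀ n, 3 ≤ n → s n =
      a n * d' n * s (n - 1) + b n * b (n - 1) * c n * d' (n - 1) * s (n - 2)
        + b n * b (n - 1) * b (n - 2) * d' n * d' (n - 1) * d' (n - 2) * s (n - 3))
    (n : ℕ) (hn : 2 ≤ n) :
    s n = d ^ ((2 * (n + 1)) / 3) * (d ^ 2 + z ^ 3) ^ ((2 * n) / 3) * mu 3 0 d z (n + 1) := by
  revert hn
  induction n using Nat.strong_induction_on with
  | _ n IH =>
    intro hn
    by_cases hle : n ≤ 4
    · -- base cases n = 2, 3, 4
      interval_cases n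
      · -- n = 2
        obtain ⟨ha2, hb2, hc2, hd2⟩ := h2 2 le_rfl rfl
        rw [hs2, hs1, hs0, ha0, ha1, hb0, hb1, hc1, hd1, ha2, hb2, hc2, hd2,
          mu_eq_auxU, show (2:ℕ)+1 = 3 from rfl, auxU_three]
        norm_num
        ring
      · -- n = 3
        have hrec := hsn 3 le_rfl
        norm_num at hrec
        obtain ⟨ha3, hb3, hc3, hd3⟩ := h0 3 (by norm_num) rfl
        obtain ⟨ha2, hb2, hc2, hd2⟩ := h2 2 le_rfl rfl
        have i2 := IH 2 (by norm_num) (by norm_num)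
        rw [mu_eq_auxU, show (2:ℕ)+1 = 3 from rfl, auxU_three] at i2
        norm_num at i2
        rw [hrec, hs1, hs0, ha0, ha1, hb0, hb1, hc1, hd1, ha3, hb3, hc3, hd3,
          hb2, hd2, i2, mu_eq_auxU, show (3:ℕ)+1 = 4 from rfl, auxU_four]
        norm_num
        ring
      · -- n = 4
        have hrec := hsn 4 (by norm_num)
        norm_num at hrec
        obtain ⟨ha4, hb4, hc4, hd4⟩ := h1 4 (by norm_num) rfl
        obtain ⟨ha3, hb3, hc3, hd3⟩ := h0 3 (by norm_num) rfl
        obtain ⟨ha2, hb2, hc2, hd2⟩ := h2 2 le_rfl rfl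
        have i2 := IH 2 (by norm_num) (by norm_num)
        have i3 := IH 3 (by norm_num) (by norm_num)
        rw [mu_eq_auxU, show (2:ℕ)+1 = 3 from rfl, auxU_three] at i2
        rw [mu_eq_auxU, show (3:ℕ)+1 = 4 from rfl, auxU_four] at i3
        norm_num at i2 i3
        rw [hrec, hs1, ha0, ha1, hb0, hb1, hc1, hd1, ha4, hb4, hc4, hd4,
          hb3, hd3, hb2, hd2, i2, i3, mu_eq_auxU, show (4:ℕ)+1 = 5 from rfl, auxU_five]
        norm_num
        ring
    · -- inductive step: n ≥ 5
      have h5 : 5 ≤ n := by omega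
      obtain ⟨q, rfl | rfl | rfl⟩ : ∃ q, n = 3*q ∨ n = 3*q+1 ∨ n = 3*q+2 := ⟨n / 3, by omega⟩
      · -- n ≡ 0 (mod 3), n = 3(p+2)
        obtain ⟨p, rfl⟩ : ∃ p, q = p + 2 := ⟨q - 2, by omega⟩
        obtain ⟨han, hbn, hcn, hdn⟩ := h0 (3*(p+2)) (by omega) (by omega)
        obtain ⟨ha', hb', hc', hd''⟩ := h2 (3*p+5) (by omega) (by omega)
        obtain ⟨ha'', hb'', hc'', hd'''⟩ := h1 (3*p+4) (by omega) (by omega)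
        have hrec := hsn (3*(p+2)) (by omega)
        rw [show 3*(p+2) - 1 = 3*p+5 from by omega, show 3*(p+2) - 2 = 3*p+4 from by omega,
          show 3*(p+2) - 3 = 3*p+3 from by omega] at hrec
        have i1 := IH (3*p+5) (by omega) (by omega)
        have i2 := IH (3*p+4) (by omega) (by omega)
        have i3 := IH (3*p+3) (by omega) (by omega)
        rw [show (2*(3*p+5+1))/3 = 2*p+4 from by omega, show (2*(3*p+5))/3 = 2*p+3 from by omega,
          show 3*p+5+1 = 3*p+6 from by omega, mu_eq_auxU] at i1
        rw [show (2*(3*p+4+1))/3 = 2*p+3 from by omega, show (2*(3*p+4))/3 = 2*p+2 from by omega,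
          show 3*p+4+1 = 3*p+5 from by omega, mu_eq_auxU] at i2
        rw [show (2*(3*p+3+1))/3 = 2*p+2 from by omega, show (2*(3*p+3))/3 = 2*p+2 from by omega,
          show 3*p+3+1 = 3*p+4 from by omega, mu_eq_auxU] at i3
        rw [hrec, han, hbn, hcn, hdn, hb', hd'', hb'', hd''', i1, i2, i3,
          show (2*(3*(p+2)+1))/3 = 2*p+4 from by omega,
          show (2*(3*(p+2)))/3 = 2*p+4 from by omega,
          show 3*(p+2)+1 = 3*p+7 from by omega, mu_eq_auxU]
        have hrec3 := auxU_rec d z (3*p+4)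
        rw [show 3*p+4+3 = 3*p+7 from by omega, show 3*p+4+2 = 3*p+6 from by omega,
          show 3*p+4+1 = 3*p+5 from by omega] at hrec3
        rw [show (z:ℤ)^3 + d^2 = d^2 + z^3 from by ring] at hrec3 ⊢
        linear_combination (-(d^(2*p+4) * (d^2+z^3)^(2*p+4))) * hrec3
      · -- n ≡ 1 (mod 3), n = 3(p+2)+1
        obtain ⟨p, rfl⟩ : ∃ p, q = p + 2 := ⟨q - 2, by omega⟩
        obtain ⟨han, hbn, hcn, hdn⟩ := h1 (3*(p+2)+1) (by omega) (by omega)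
        obtain ⟨ha', hb', hc', hd''⟩ := h0 (3*p+6) (by omega) (by omega)
        obtain ⟨ha'', hb'', hc'', hd'''⟩ := h2 (3*p+5) (by omega) (by omega)
        have hrec := hsn (3*(p+2)+1) (by omega)
        rw [show 3*(p+2)+1 - 1 = 3*p+6 from by omega, show 3*(p+2)+1 - 2 = 3*p+5 from by omega,
          show 3*(p+2)+1 - 3 = 3*p+4 from by omega] at hrec
        have i1 := IH (3*p+6) (by omega) (by omega)
        have i2 := IH (3*p+5) (by omega) (by omega)
        have i3 := IH (3*p+4) (by omega) (by omega)
        rw [show (2*(3*p+6+1))/3 = 2*p+4 from by omega, show (2*(3*p+6))/3 = 2*p+4 from by omega,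
          show 3*p+6+1 = 3*p+7 from by omega, mu_eq_auxU] at i1
        rw [show (2*(3*p+5+1))/3 = 2*p+4 from by omega, show (2*(3*p+5))/3 = 2*p+3 from by omega,
          show 3*p+5+1 = 3*p+6 from by omega, mu_eq_auxU] at i2
        rw [show (2*(3*p+4+1))/3 = 2*p+3 from by omega, show (2*(3*p+4))/3 = 2*p+2 from by omega,
          show 3*p+4+1 = 3*p+5 from by omega, mu_eq_auxU] at i3
        rw [hrec, han, hbn, hcn, hdn, hb', hd'', hb'', hd''', i1, i2, i3,
          show (2*(3*(p+2)+1+1))/3 = 2*p+5 from by omega,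
          show (2*(3*(p+2)+1))/3 = 2*p+4 from by omega,
          show 3*(p+2)+1+1 = 3*p+8 from by omega, mu_eq_auxU]
        have hrec3 := auxU_rec d z (3*p+5)
        rw [show 3*p+5+3 = 3*p+8 from by omega, show 3*p+5+2 = 3*p+7 from by omega,
          show 3*p+5+1 = 3*p+6 from by omega] at hrec3
        rw [show (z:ℤ)^3 + d^2 = d^2 + z^3 from by ring] at hrec3 ⊢
        linear_combination (-(d^(2*p+5) * (d^2+z^3)^(2*p+4))) * hrec3
      · -- n ≡ 2 (mod 3), n = 3(p+1)+2
        obtain ⟨p, rfl⟩ : ∃ p, q = p + 1 := ⟨q - 1, by omega⟩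
        obtain ⟨han, hbn, hcn, hdn⟩ := h2 (3*(p+1)+2) (by omega) (by omega)
        obtain ⟨ha', hb', hc', hd''⟩ := h1 (3*p+4) (by omega) (by omega)
        obtain ⟨ha'', hb'', hc'', hd'''⟩ := h0 (3*p+3) (by omega) (by omega)
        have hrec := hsn (3*(p+1)+2) (by omega)
        rw [show 3*(p+1)+2 - 1 = 3*p+4 from by omega, show 3*(p+1)+2 - 2 = 3*p+3 from by omega,
          show 3*(p+1)+2 - 3 = 3*p+2 from by omega] at hrec
        have i1 := IH (3*p+4) (by omega) (by omega)
        have i2 := IH (3*p+3) (by omega) (by omega)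
        have i3 := IH (3*p+2) (by omega) (by omega)
        rw [show (2*(3*p+4+1))/3 = 2*p+3 from by omega, show (2*(3*p+4))/3 = 2*p+2 from by omega,
          show 3*p+4+1 = 3*p+5 from by omega, mu_eq_auxU] at i1
        rw [show (2*(3*p+3+1))/3 = 2*p+2 from by omega, show (2*(3*p+3))/3 = 2*p+2 from by omega,
          show 3*p+3+1 = 3*p+4 from by omega, mu_eq_auxU] at i2
        rw [show (2*(3*p+2+1))/3 = 2*p+2 from by omega, show (2*(3*p+2))/3 = 2*p+1 from by omega,
          show 3*p+2+1 = 3*p+3 from by omega, mu_eq_auxU] at i3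
        rw [hrec, han, hbn, hcn, hdn, hb', hd'', hb'', hd''', i1, i2, i3,
          show (2*(3*(p+1)+2+1))/3 = 2*p+4 from by omega,
          show (2*(3*(p+1)+2))/3 = 2*p+3 from by omega,
          show 3*(p+1)+2+1 = 3*p+6 from by omega, mu_eq_auxU]
        have hrec3 := auxU_rec d z (3*p+3)
        rw [show 3*p+3+3 = 3*p+6 from by omega, show 3*p+3+2 = 3*p+5 from by omega,
          show 3*p+3+1 = 3*p+4 from by omega] at hrec3
        rw [show (z:ℤ)^3 + d^2 = d^2 + z^3 from by ring] at hrec3 ⊢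
        linear_combination (-(d^(2*p+4) * (d^2+z^3)^(2*p+3))) * hrec3
end

section
/- Let a_{00}, a_{01}, a_{02}, a_{20}, a_{21}, a_{22} be rational numbers with a_{02} ≠ a_{22} and a_{01}a_{22} ≠ a_{02}a_{21}. Then there exist rational numbers a_0, a_1, a_2, a_3, b_0, b_1, b_2, b_3 with a_0 = b_0 = 1 such that the 3×3 matrix product M(a_0,b_0)·M(a_1,b_1)·M(a_2,b_2)·M(a_3,b_3), where M(a,b) = [[a,1,0],[b,0,1],[1,0,0]], has first row (a_{00}, a_{01}, a_{02}) and third row (a_{20}, a_{21}, a_{22}). -/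
/-!
Right multiplication by `M(a, b)` sends a row vector `(x, y, z)` to `(x a + y b + z, x, y)`, so
the rows of `M(1, 1) M(a₁, b₁) M(a₂, b₂) M(a₃, b₃)` arise from the rows `(1, 1, 0)` and `(1, 0, 0)`
of `M(1, 1)` by a three-term recursion. Reading the prescribed entries from the right: the last
entries are `a₁ + b₁` and `a₁`, which fix `a₁, b₁`; the middle ones differ by `a₂ (a₀₂ - a₂₂) + 1`,
which fixes `a₂` and then `b₂`; the first ones are `a₀₁ a₃ + a₀₂ b₃ + 1` and `a₂₁ a₃ + a₂₂ b₃ + 1`,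
a linear system in `(a₃, b₃)` with determinant `a₀₁ a₂₂ - a₀₂ a₂₁`.
-/

open Matrix

local notation "M(" a ", " b ")" => !![a, 1, 0; b, 0, 1; 1, 0, 0]

section
variable {R : Type*} [NonAssocSemiring R]

theorem vecMul_bcf (v : Fin 3 → R) (a b : R) :
    v ᵥ* M(a, b) = ![v 0 * a + v 1 * b + v 2, v 0, v 1] := by
  ext j; fin_cases j <;> simp [vecMul, dotProduct, Fin.sum_univ_three]

variable (a₁ a₂ a₃ b₁ b₂ b₃ : R)

theorem bcf_four_row_zero :
    (M(1, 1) * M(a₁, b₁) * M(a₂, b₂) * M(a₃, b₃) : Matrix (Fin 3) (Fin 3) R) 0 =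
      ![((a₁ + b₁) * a₂ + b₂ + 1) * a₃ + (a₁ + b₁) * b₃ + 1, (a₁ + b₁) * a₂ + b₂ + 1, a₁ + b₁] := by
  simp only [mul_apply_eq_vecMul, vecMul_bcf, of_apply, cons_val_zero, cons_val_one, cons_val_two,
    head_cons, tail_cons, one_mul, add_zero]

theorem bcf_four_row_two :
    (M(1, 1) * M(a₁, b₁) * M(a₂, b₂) * M(a₃, b₃) : Matrix (Fin 3) (Fin 3) R) 2 =
      ![(a₁ * a₂ + b₂) * a₃ + a₁ * b₃ + 1, a₁ * a₂ + b₂, a₁] := by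
  simp only [mul_apply_eq_vecMul, vecMul_bcf, of_apply, cons_val_zero, cons_val_one, cons_val_two,
    head_cons, tail_cons, one_mul, zero_mul, add_zero]

end

theorem exists_mul_add_mul_eq_of_mul_ne_mul {K : Type*} [Field K] {a b c d : K}
    (h : a * d ≠ b * c) (e f : K) : ∃ x y, a * x + b * y = e ∧ c * x + d * y = f := by
  have hdet : a * d - b * c ≠ 0 := sub_ne_zero.mpr h
  refine ⟨(e * d - b * f) / (a * d - b * c), (a * f - c * e) / (a * d - b * c), ?_, ?_⟩ <;>
    · rw [mul_div_assoc', mul_div_assoc', ← add_div, div_eq_iff hdet]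
      ring

/-- If `a₀₂ ≠ a₂₂` and `a₀₁a₂₂ ≠ a₀₂a₂₁`, then there are rational numbers
`a_0, a_1, a_2, a_3, b_0, b_1, b_2, b_3` with `a_0 = b_0 = 1` such that the
product `M(a_0,b_0)·M(a_1,b_1)·M(a_2,b_2)·M(a_3,b_3)` of the matrices
`M(a,b) = [[a,1,0],[b,0,1],[1,0,0]]` has first row `(a₀₀, a₀₁, a₀₂)` and
third row `(a₂₀, a₂₁, a₂₂)`. -/
theorem exists_bcf_matrix_factorization (a00 a01 a02 a20 a21 a22 : ℚ)
    (h1 : a02 ≠ a22) (h2 : a01 * a22 ≠ a02 * a21) :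
    ∃ a0 a1 a2 a3 b0 b1 b2 b3 : ℚ, a0 = 1 ∧ b0 = 1 ∧
      ∀ P : Matrix (Fin 3) (Fin 3) ℚ,
        P = !![a0, 1, 0; b0, 0, 1; 1, 0, 0] * !![a1, 1, 0; b1, 0, 1; 1, 0, 0]
              * !![a2, 1, 0; b2, 0, 1; 1, 0, 0] * !![a3, 1, 0; b3, 0, 1; 1, 0, 0] →
        P 0 0 = a00 ∧ P 0 1 = a01 ∧ P 0 2 = a02 ∧
        P 2 0 = a20 ∧ P 2 1 = a21 ∧ P 2 2 = a22 := by
  set a2 := (a01 - a21 - 1) / (a02 - a22)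
  have ha2 : a2 * (a02 - a22) = a01 - a21 - 1 := div_mul_cancel₀ _ (sub_ne_zero.mpr h1)
  obtain ⟨a3, b3, hrow0, hrow2⟩ := exists_mul_add_mul_eq_of_mul_ne_mul h2 (a00 - 1) (a20 - 1)
  refine ⟨1, a22, a2, a3, 1, a02 - a22, a21 - a2 * a22, b3, rfl, rfl, ?_⟩
  rintro P rfl
  simp only [bcf_four_row_zero, bcf_four_row_two, cons_val_zero, cons_val_one, cons_val_two,
    head_cons, tail_cons]
  exact ⟨by linear_combination a3 * ha2 + hrow0, by linear_combination ha2, by ring,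
    by linear_combination hrow2, by ring, trivial⟩
end
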